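/- Let M be a non-trivial model of the free equality axioms FEA(L) and let E and E' be EQ-formulas over L. Then: (1) Sol_M(E) = Sol_M(E') if and only if E ↔ E' is true in every model of FEA(L); (2) Sol_M(E) ⊆ Sol_M(E') if and only if E → E' is true in every model of FEA(L). -/

import Mathlib

/-- A first-order language: function symbols with arities and predicate
symbols with arities.  Variables are natural numbers. -/
structure FOLang where
  Func : Type
  farity : Func → ℕ
  Pred : Type
  parity : Pred → ℕ

/-- The language has at least one constant. -/
def FOLang.HasConst (L : FOLang) : Prop := ∃ f : L.Func, L.farity f = 0

/-- Terms over a language. -/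
inductive FOTerm (L : FOLang) : Type where
  | var : ℕ → FOTerm L
  | func : (f : L.Func) → (Fin (L.farity f) → FOTerm L) → FOTerm L

namespace FOTerm

variable {L : FOLang}

/-- The (finite) set of variables occurring in a term. -/
def vars : FOTerm L → Finset ℕ
  | .var x => {x}
  | .func _ ts => Finset.univ.biUnion fun i => (ts i).vars

/-- Application of a (total) substitution to a term: simultaneously replace
every variable `x` by the term `f x`. -/
def applyT (f : ℕ → FOTerm L) : FOTerm L → FOTerm L
  | .var x => f x
  | .func g ts => .func g fun i => (ts i).applyT f

end FOTerm

/-- A pre-interpretation: a non-empty universe together with an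
interpretation of the function symbols. -/
structure FOStruc (L : FOLang) where
  carrier : Type
  inhab : Nonempty carrier
  funcs : (f : L.Func) → (Fin (L.farity f) → carrier) → carrier

/-- Evaluation of a term under a valuation. -/
def FOTerm.eval {L : FOLang} (M : FOStruc L) (h : ℕ → M.carrier) : FOTerm L → M.carrier
  | .var x => h x
  | .func f ts => M.funcs f fun i => (ts i).eval M h

/-- The set of `M`-instances of a term: values of the term under all
valuations. -/
def InstT {L : FOLang} (M : FOStruc L) (t : FOTerm L) : Set M.carrier :=
  { a | ∃ h : ℕ → M.carrier, t.eval M h = a }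

/-- `M` is a model of the free equality axioms `FEA(L)`. -/
structure IsFEA {L : FOLang} (M : FOStruc L) : Prop where
  inj : ∀ f : L.Func, Function.Injective (M.funcs f)
  disj : ∀ f g : L.Func, f ≠ g → ∀ a b, M.funcs f a ≠ M.funcs g b
  occ : ∀ (x : ℕ) (t : FOTerm L), t ≠ .var x → x ∈ t.vars →
      ∀ h : ℕ → M.carrier, h x ≠ t.eval M h

/-- The domain has at least two elements. -/
def FOStruc.Nontriv {L : FOLang} (M : FOStruc L) : Prop :=
  ∃ a b : M.carrier, a ≠ b

/-- The difference set `Diff(s,t)`: `InDiff s t (s',t')` means the pair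
`(s',t')` belongs to `Diff(s,t)`. -/
inductive InDiff {L : FOLang} : FOTerm L → FOTerm L → FOTerm L × FOTerm L → Prop where
  | var (x : ℕ) : InDiff (.var x) (.var x) (.var x, .var x)
  | varVar {x y : ℕ} : x ≠ y → InDiff (.var x) (.var y) (.var x, .var y)
  | varFunc (x : ℕ) (f : L.Func) (ts : Fin (L.farity f) → FOTerm L) :
      InDiff (.var x) (.func f ts) (.var x, .func f ts)
  | funcVar (f : L.Func) (ss : Fin (L.farity f) → FOTerm L) (y : ℕ) :
      InDiff (.func f ss) (.var y) (.func f ss, .var y)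
  | funcFunc {f g : L.Func} (ss : Fin (L.farity f) → FOTerm L)
      (ts : Fin (L.farity g) → FOTerm L) : f ≠ g →
      InDiff (.func f ss) (.func g ts) (.func f ss, .func g ts)
  | func {f : L.Func} (ss ts : Fin (L.farity f) → FOTerm L) (i : Fin (L.farity f))
      {p : FOTerm L × FOTerm L} :
      InDiff (ss i) (ts i) p → InDiff (.func f ss) (.func f ts) p
/-- An interpretation: a pre-interpretation together with an interpretation
of the predicate symbols. -/
structure FOInterp (L : FOLang) extends FOStruc L where
  preds : (p : L.Pred) → (Fin (L.parity p) → carrier) → Prop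

/-- First-order formulas. -/
inductive FOForm (L : FOLang) : Type where
  | tru : FOForm L
  | fal : FOForm L
  | eq : FOTerm L → FOTerm L → FOForm L
  | atom : (p : L.Pred) → (Fin (L.parity p) → FOTerm L) → FOForm L
  | not : FOForm L → FOForm L
  | and : FOForm L → FOForm L → FOForm L
  | or : FOForm L → FOForm L → FOForm L
  | imp : FOForm L → FOForm L → FOForm L
  | iff : FOForm L → FOForm L → FOForm L
  | ex : ℕ → FOForm L → FOForm L
  | all : ℕ → FOForm L → FOForm L

namespace FOForm

variable {L : FOLang}

/-- Tarskian satisfaction of a formula in an interpretation under a valuation. -/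
def Sat (I : FOInterp L) (h : ℕ → I.carrier) : FOForm L → Prop
  | .tru => True
  | .fal => False
  | .eq s t => s.eval I.toFOStruc h = t.eval I.toFOStruc h
  | .atom p ts => I.preds p fun i => (ts i).eval I.toFOStruc h
  | .not F => ¬ F.Sat I h
  | .and F G => F.Sat I h ∧ G.Sat I h
  | .or F G => F.Sat I h ∨ G.Sat I h
  | .imp F G => F.Sat I h → G.Sat I h
  | .iff F G => F.Sat I h ↔ G.Sat I h
  | .ex x F => ∃ d : I.carrier, F.Sat I (Function.update h x d)
  | .all x F => ∀ d : I.carrier, F.Sat I (Function.update h x d)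

/-- Free variables of a formula. -/
def fv : FOForm L → Finset ℕ
  | .tru => ∅
  | .fal => ∅
  | .eq s t => s.vars ∪ t.vars
  | .atom _ ts => Finset.univ.biUnion fun i => (ts i).vars
  | .not F => F.fv
  | .and F G => F.fv ∪ G.fv
  | .or F G => F.fv ∪ G.fv
  | .imp F G => F.fv ∪ G.fv
  | .iff F G => F.fv ∪ G.fv
  | .ex x F => F.fv.erase x
  | .all x F => F.fv.erase x

end FOForm

/-- The interpretation obtained from a pre-interpretation by interpreting
every predicate symbol as the empty relation (for formulas without atoms
the choice is irrelevant). -/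
def FOStruc.toInterp {L : FOLang} (M : FOStruc L) : FOInterp L :=
  { toFOStruc := M, preds := fun _ _ => False }

/-- Satisfaction of an (equational) formula in a pre-interpretation. -/
def ESat {L : FOLang} (M : FOStruc L) (h : ℕ → M.carrier) (F : FOForm L) : Prop :=
  F.Sat M.toInterp h

/-- The set of solutions of a formula in a pre-interpretation. -/
def SolE {L : FOLang} (M : FOStruc L) (F : FOForm L) : Set (ℕ → M.carrier) :=
  { h | ESat M h F }

/-- EQ-formulas: built from `True`, `False` and equations using `∧` and `∃`. -/
inductive IsEQ {L : FOLang} : FOForm L → Prop where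
  | tru : IsEQ .tru
  | fal : IsEQ .fal
  | eq (s t : FOTerm L) : IsEQ (.eq s t)
  | and {F G : FOForm L} : IsEQ F → IsEQ G → IsEQ (.and F G)
  | ex (x : ℕ) {F : FOForm L} : IsEQ F → IsEQ (.ex x F)

/-- Equational formulas: first-order formulas with no atoms other than
equations. -/
inductive IsEquational {L : FOLang} : FOForm L → Prop where
  | tru : IsEquational .tru
  | fal : IsEquational .fal
  | eq (s t : FOTerm L) : IsEquational (.eq s t)
  | not {F : FOForm L} : IsEquational F → IsEquational (.not F)
  | and {F G : FOForm L} : IsEquational F → IsEquational G → IsEquational (.and F G)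
  | or {F G : FOForm L} : IsEquational F → IsEquational G → IsEquational (.or F G)
  | imp {F G : FOForm L} : IsEquational F → IsEquational G → IsEquational (.imp F G)
  | iff {F G : FOForm L} : IsEquational F → IsEquational G → IsEquational (.iff F G)
  | ex (x : ℕ) {F : FOForm L} : IsEquational F → IsEquational (.ex x F)
  | all (x : ℕ) {F : FOForm L} : IsEquational F → IsEquational (.all x F)

/-- `F ≼ F'` : `F → F'` is true in every model of `FEA(L)`. -/
def EQle {L : FOLang} (F F' : FOForm L) : Prop :=
  ∀ M : FOStruc L, IsFEA M → ∀ h : ℕ → M.carrier, ESat M h F → ESat M h F'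

/-- `F ≈ F'` : `F ↔ F'` is true in every model of `FEA(L)`. -/
def EQequiv {L : FOLang} (F F' : FOForm L) : Prop := EQle F F' ∧ EQle F' F

/-- `F ≺ F'`. -/
def EQlt {L : FOLang} (F F' : FOForm L) : Prop := EQle F F' ∧ ¬ EQequiv F F'

/-- The conjunction `x₁ = s₁ ∧ … ∧ xₙ = sₙ`. -/
def conjOf {L : FOLang} : List (ℕ × FOTerm L) → FOForm L
  | [] => .tru
  | [p] => .eq (.var p.1) p.2
  | p :: rest => .and (.eq (.var p.1) p.2) (conjOf rest)

/-- The formula `(∃ z₁) … (∃ z_k) F`. -/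
def exOf {L : FOLang} (zs : List ℕ) (F : FOForm L) : FOForm L :=
  zs.foldr .ex F

/-- The disjunction `F₁ ∨ … ∨ Fₙ`. -/
def disjOf {L : FOLang} : List (FOForm L) → FOForm L
  | [] => .fal
  | [F] => F
  | F :: rest => .or F (disjOf rest)

/-- A formula is in solved form if it is `True`, `False`, or of the shape
`∃ z₁ … ∃ z_k (x₁ = s₁ ∧ … ∧ xₙ = sₙ)` where the `xᵢ` and `z_j` are
pairwise distinct, no `xᵢ` occurs in any right-hand side, every `z_j`
occurs in the conjunction, and no `sᵢ` is one of the `z_j`. -/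
def SolvedForm {L : FOLang} (F : FOForm L) : Prop :=
  F = .tru ∨ F = .fal ∨
    ∃ (zs : List ℕ) (eqs : List (ℕ × FOTerm L)),
      eqs ≠ [] ∧
      F = exOf zs (conjOf eqs) ∧
      (eqs.map Prod.fst ++ zs).Nodup ∧
      (∀ p ∈ eqs, ∀ q ∈ eqs, p.1 ∉ q.2.vars) ∧
      (∀ z ∈ zs, ∃ p ∈ eqs, z ∈ p.2.vars) ∧
      (∀ z ∈ zs, ∀ p ∈ eqs, p.2 ≠ .var z)

/-- The projection of an EQ-formula onto a finite set of variables: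
existentially quantify the free variables not in `X`; the projection of
`False` is `False`. -/
def projE {L : FOLang} (E : FOForm L) (X : Finset ℕ) : FOForm L :=
  match E with
  | .fal => .fal
  | E => exOf ((E.fv \ X).sort (· ≤ ·)) E

/-- The universal closure of a formula. -/
def univClosure {L : FOLang} (F : FOForm L) : FOForm L :=
  (F.fv.sort (· ≤ ·)).foldr .all F

/-- A formula is valid if it is true in every interpretation (under every
valuation). -/
def FOValid {L : FOLang} (F : FOForm L) : Prop :=
  ∀ (I : FOInterp L) (h : ℕ → I.carrier), F.Sat I h

/-- An EQ-formula is consistent if it has a solution in some model of the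
free equality axioms. -/
def EQConsistent {L : FOLang} (E : FOForm L) : Prop :=
  ∃ M : FOStruc L, IsFEA M ∧ ∃ h : ℕ → M.carrier, ESat M h E
/-- Ground terms: terms with no variables. -/
def GroundTerm (L : FOLang) : Type := { t : FOTerm L // t.vars = ∅ }

/-- The Herbrand pre-interpretation: its domain is the set of ground terms
and function symbols are interpreted formally. -/
def Herbrand (L : FOLang) (hc : L.HasConst) : FOStruc L where
  carrier := GroundTerm L
  inhab := by
    obtain ⟨f, hf⟩ := hc
    refine ⟨⟨.func f (fun i => Fin.elim0 (Fin.cast hf i)), ?_⟩⟩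
    ext x
    simp only [FOTerm.vars, Finset.mem_biUnion, Finset.mem_univ, true_and,
      Finset.notMem_empty, iff_false, not_exists]
    intro i
    exact Fin.elim0 (Fin.cast hf i)
  funcs := fun f ts => ⟨.func f (fun i => (ts i).1), by
    ext x
    simp only [FOTerm.vars, Finset.mem_biUnion, Finset.mem_univ, true_and,
      Finset.notMem_empty, iff_false, not_exists]
    intro i hx
    rw [(ts i).2] at hx
    exact Finset.notMem_empty x hx⟩

/-- The language obtained by adding a countably infinite set of new
constants. -/
def addConsts (L : FOLang) : FOLang where
  Func := L.Func ⊕ ℕ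
  farity := Sum.elim L.farity fun _ => 0
  Pred := L.Pred
  parity := L.parity

/-- The canonical embedding of terms into the extended language. -/
def FOTerm.lift {L : FOLang} : FOTerm L → FOTerm (addConsts L)
  | .var x => .var x
  | .func f ts => .func (Sum.inl f) fun i => (ts i).lift

/-- The canonical embedding of formulas into the extended language. -/
def FOForm.lift {L : FOLang} : FOForm L → FOForm (addConsts L)
  | .tru => .tru
  | .fal => .fal
  | .eq s t => .eq s.lift t.lift
  | .atom p ts => .atom p fun i => (ts i).lift
  | .not F => .not F.lift
  | .and F G => .and F.lift G.lift
  | .or F G => .or F.lift G.lift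
  | .imp F G => .imp F.lift G.lift
  | .iff F G => .iff F.lift G.lift
  | .ex x F => .ex x F.lift
  | .all x F => .all x F.lift
/-- A finite substitution: a finite set of variables (its domain) together
with an assignment of terms to variables which is the identity outside the
domain. -/
structure FinSubst (L : FOLang) where
  dom : Finset ℕ
  map : ℕ → FOTerm L
  outside : ∀ x ∉ dom, map x = .var x

namespace FinSubst

variable {L : FOLang}

/-- `Range(σ)`: the set of variables occurring in the terms `σ x`, `x ∈ Dom(σ)`. -/
def range (σ : FinSubst L) : Finset ℕ :=
  σ.dom.biUnion fun x => (σ.map x).vars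

/-- `θ` is an extension of `σ`. -/
def Extends (θ σ : FinSubst L) : Prop :=
  σ.dom ⊆ θ.dom ∧ ∀ x ∈ σ.dom, θ.map x = σ.map x

/-- `θ` is a regular extension of `σ`: it extends `σ` and maps
`Dom(θ) \ Dom(σ)` injectively into the variables not in `Range(σ)`. -/
def RegExt (θ σ : FinSubst L) : Prop :=
  Extends θ σ ∧
  (∀ x ∈ θ.dom, x ∉ σ.dom → ∃ y : ℕ, y ∉ σ.range ∧ θ.map x = .var y) ∧
  Set.InjOn θ.map ↑(θ.dom \ σ.dom)

/-- The set of `M`-instances of a substitution. -/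
def Inst {L : FOLang} (M : FOStruc L) (σ : FinSubst L) : Set (ℕ → M.carrier) :=
  { h | ∃ g : ℕ → M.carrier, ∀ x ∈ σ.dom, h x = (σ.map x).eval M g }

open Classical in
/-- The restriction of `σ` to `Dom(σ) ∩ X`. -/
noncomputable def restrict (σ : FinSubst L) (X : Set ℕ) : FinSubst L where
  dom := σ.dom.filter fun x => x ∈ X
  map := fun x => if x ∈ σ.dom ∧ x ∈ X then σ.map x else .var x
  outside := fun x hx => if_neg fun h => hx (Finset.mem_filter.2 ⟨h.1, h.2⟩)

/-- The composition `σθ`, defined on `Dom(σ)` by `x ↦ (σ x)θ`. -/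
def comp (σ θ : FinSubst L) : FinSubst L where
  dom := σ.dom
  map := fun x => if x ∈ σ.dom then (σ.map x).applyT θ.map else .var x
  outside := fun _ hx => if_neg hx

/-- `σ ≼ θ` : `θ` is more general than `σ`. -/
def Le (σ θ : FinSubst L) : Prop :=
  ∃ σ' θ' τ : FinSubst L,
    RegExt σ' σ ∧ RegExt θ' θ ∧ σ'.dom = θ'.dom ∧
    θ'.range ⊆ τ.dom ∧ σ' = θ'.comp τ

/-- `σ ≈ θ`. -/
def Equiv (σ θ : FinSubst L) : Prop := Le σ θ ∧ Le θ σ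

/-- A permutation: a substitution mapping its domain injectively to
variables. -/
def IsPerm (τ : FinSubst L) : Prop :=
  (∀ x ∈ τ.dom, ∃ y : ℕ, τ.map x = .var y) ∧ Set.InjOn τ.map ↑τ.dom

/-- The empty substitution. -/
def empty (L : FOLang) : FinSubst L where
  dom := ∅
  map := fun x => .var x
  outside := fun _ _ => rfl

/-- The kernel of a substitution: the intersection of all sets `X` of
variables such that `σ↾X ≈ σ`. -/
def kernel (σ : FinSubst L) : Set ℕ :=
  ⋂₀ { X : Set ℕ | Equiv (σ.restrict X) σ }

end FinSubst

noncomputable section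

theorem exists_notin_finset (s : Finset ℕ) : ∃ n : ℕ, n ∉ s :=
  ⟨s.sup id + 1, fun h => by
    have := Finset.le_sup (f := id) h
    simp only [id] at this
    omega⟩

/-- The first variable not belonging to a given finite set of variables. -/
def freshVar (s : Finset ℕ) : ℕ := Nat.find (exists_notin_finset s)

/-- Insert a binding into a substitution. -/
def FinSubst.insertB {L : FOLang} (σ : FinSubst L) (x : ℕ) (t : FOTerm L) :
    FinSubst L where
  dom := insert x σ.dom
  map := Function.update σ.map x t
  outside := by
    intro z hz
    have hzx : z ≠ x := fun h => hz (h ▸ Finset.mem_insert_self x σ.dom)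
    have hzd : z ∉ σ.dom := fun h => hz (Finset.mem_insert_of_mem h)
    rw [Function.update_of_ne hzx]
    exact σ.outside z hzd

/-- One step of the regular-extension procedure: extend the substitution
with a binding for `x` (to itself if possible, otherwise to the first
variable not occurring in the range). -/
def regStep {L : FOLang} (acc : FinSubst L) (x : ℕ) : FinSubst L :=
  if x ∈ acc.dom then acc
  else acc.insertB x (.var (if x ∈ acc.range then freshVar acc.range else x))

/-- Restrict `σ` to the free variables of `F` and extend the result
regularly to a substitution whose domain is exactly `fv F`. -/
def FinSubst.extendFV {L : FOLang} (σ : FinSubst L) (F : FOForm L) : FinSubst L :=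
  (F.fv.sort (· ≤ ·)).foldl regStep (σ.restrict ↑F.fv)

/-- Capture-avoiding simultaneous substitution on formulas (bound variables
are renamed as needed). -/
def FOForm.applyF {L : FOLang} (f : ℕ → FOTerm L) : FOForm L → FOForm L
  | .tru => .tru
  | .fal => .fal
  | .eq s t => .eq (s.applyT f) (t.applyT f)
  | .atom p ts => .atom p fun i => (ts i).applyT f
  | .not F => .not (F.applyF f)
  | .and F G => .and (F.applyF f) (G.applyF f)
  | .or F G => .or (F.applyF f) (G.applyF f)
  | .imp F G => .imp (F.applyF f) (G.applyF f)
  | .iff F G => .iff (F.applyF f) (G.applyF f)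
  | .ex x G =>
      let R : Finset ℕ := (G.fv.erase x).biUnion fun z => (f z).vars
      let y : ℕ := if x ∈ R then freshVar R else x
      .ex y (G.applyF (Function.update f x (.var y)))
  | .all x G =>
      let R : Finset ℕ := (G.fv.erase x).biUnion fun z => (f z).vars
      let y : ℕ := if x ∈ R then freshVar R else x
      .all y (G.applyF (Function.update f x (.var y)))

/-- The application `Fσ` of a finite substitution to a formula: restrict
`σ` to the free variables of `F`, extend regularly to all of `fv F`, and
substitute capture-avoidingly. -/
def FOForm.applyS {L : FOLang} (σ : FinSubst L) (F : FOForm L) : FOForm L :=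
  F.applyF (σ.extendFV F).map

end
/-- The set of finite substitutions together with an added bottom element
`⊥` (represented by `none`): the extended preorder. -/
def LeBot {L : FOLang} : Option (FinSubst L) → Option (FinSubst L) → Prop
  | none, _ => True
  | some _, none => False
  | some σ, some θ => FinSubst.Le σ θ

/-- The induced equivalence on `Subst⊥`. -/
def EquivBot {L : FOLang} (a b : Option (FinSubst L)) : Prop :=
  LeBot a b ∧ LeBot b a

/-- The quotient of `Subst⊥` by `≈`. -/
def SubstQuot (L : FOLang) : Type := Quot (EquivBot (L := L))

/-- The induced partial order on the quotient `Subst⊥/≈`. -/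
def SubstQuotLe {L : FOLang} (a b : SubstQuot L) : Prop :=
  ∃ s t : Option (FinSubst L), Quot.mk _ s = a ∧ Quot.mk _ t = b ∧ LeBot s t

/-- EQ-formulas as a subtype. -/
def EQSub (L : FOLang) : Type := { F : FOForm L // IsEQ F }

/-- The quotient of the set of EQ-formulas by `≈`. -/
def EQQuot (L : FOLang) : Type :=
  Quot (fun a b : EQSub L => EQequiv a.1 b.1)

/-- The induced partial order on the quotient of EQ-formulas. -/
def EQQuotLe {L : FOLang} (a b : EQQuot L) : Prop :=
  ∃ E E' : EQSub L, Quot.mk _ E = a ∧ Quot.mk _ E' = b ∧ EQle E.1 E'.1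

/-- The substitution `{x₁↦s₁, …, xₙ↦sₙ, y₁↦y₁, …, y_k↦y_k}` associated
with a solved form with equations `eqs` and parameters `params`. -/
theorem lookup_eq_none_of_not_mem {L : FOLang} (x : ℕ) :
    ∀ eqs : List (ℕ × FOTerm L), x ∉ eqs.map Prod.fst → eqs.lookup x = none := by
  intro eqs
  induction eqs with
  | nil => intro _; rfl
  | cons p rest ih =>
    intro hx1
    have hp : p.1 ≠ x := by
      intro h
      exact hx1 (by simp [h])
    have hr : x ∉ rest.map Prod.fst := fun h => hx1 (by simp [h])
    have hxp : (x == p.1) = false := beq_eq_false_iff_ne.mpr fun h => hp h.symm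
    simp only [List.lookup, hxp]
    exact ih hr

def solvedSubst {L : FOLang} (eqs : List (ℕ × FOTerm L)) (params : Finset ℕ) :
    FinSubst L where
  dom := (eqs.map Prod.fst).toFinset ∪ params
  map := fun x => (eqs.lookup x).getD (.var x)
  outside := by
    intro x hx
    have hx1 : x ∉ eqs.map Prod.fst := fun h =>
      hx (Finset.mem_union_left _ (List.mem_toFinset.2 h))
    simp [lookup_eq_none_of_not_mem x eqs hx1]
section UnifAux

variable {L : FOLang}

namespace FOTerm

lemma eval_congr {M : FOStruc L} {g g' : ℕ → M.carrier} :
    ∀ {t : FOTerm L}, (∀ x ∈ t.vars, g x = g' x) → t.eval M g = t.eval M g'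
  | .var x, h => h x (by simp [vars])
  | .func f ts, h => by
      simp only [eval]
      congr 1; funext i
      exact eval_congr fun x hx => h x (by
        simp only [vars, Finset.mem_biUnion, Finset.mem_univ, true_and]
        exact ⟨i, hx⟩)

lemma eval_applyT {M : FOStruc L} {g : ℕ → M.carrier} (f : ℕ → FOTerm L) :
    ∀ (t : FOTerm L), (t.applyT f).eval M g = t.eval M (fun x => (f x).eval M g)
  | .var x => rfl
  | .func c ts => by
      simp only [applyT, eval]
      congr 1; funext i; exact eval_applyT f (ts i)

lemma vars_applyT (f : ℕ → FOTerm L) :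
    ∀ (t : FOTerm L), (t.applyT f).vars = t.vars.biUnion fun x => (f x).vars
  | .var x => by simp [applyT, vars]
  | .func c ts => by
      simp only [applyT, vars]
      rw [Finset.biUnion_biUnion]
      congr 1; funext i; exact vars_applyT f (ts i)

def tsize : FOTerm L → ℕ
  | .var _ => 1
  | .func _ ts => 1 + ∑ i, tsize (ts i)

lemma tsize_pos : ∀ t : FOTerm L, 0 < t.tsize
  | .var _ => Nat.one_pos
  | .func _ _ => by simp [tsize]

end FOTerm

def psize (l : List (FOTerm L × FOTerm L)) : ℕ :=
  (l.map fun p => p.1.tsize + p.2.tsize).sum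

def pvars : List (FOTerm L × FOTerm L) → Finset ℕ
  | [] => ∅
  | p :: rest => p.1.vars ∪ p.2.vars ∪ pvars rest

lemma mem_pvars {a : ℕ} : ∀ {l : List (FOTerm L × FOTerm L)},
    a ∈ pvars l ↔ ∃ p ∈ l, a ∈ p.1.vars ∪ p.2.vars
  | [] => by simp [pvars]
  | p :: rest => by
      simp [pvars, mem_pvars (l := rest), Finset.mem_union, or_assoc]

/-- single-point substitution -/
def sub1 (x : ℕ) (t : FOTerm L) : ℕ → FOTerm L := fun y => if y = x then t else .var y

def substPairs (x : ℕ) (t : FOTerm L) (l : List (FOTerm L × FOTerm L)) :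
    List (FOTerm L × FOTerm L) :=
  l.map fun p => (p.1.applyT (sub1 x t), p.2.applyT (sub1 x t))

lemma vars_applyT_sub1 {x : ℕ} {t : FOTerm L} (s : FOTerm L) :
    (s.applyT (sub1 x t)).vars ⊆ (s.vars \ {x}) ∪ t.vars := by
  rw [FOTerm.vars_applyT]
  intro a ha
  rcases Finset.mem_biUnion.1 ha with ⟨y, hy, hay⟩
  by_cases hyx : y = x
  · subst hyx
    simp only [sub1, if_pos rfl] at hay
    exact Finset.mem_union_right _ hay
  · simp only [sub1, if_neg hyx, FOTerm.vars, Finset.mem_singleton] at hay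
    subst hay
    exact Finset.mem_union_left _ (Finset.mem_sdiff.2 ⟨hy, by simpa using hyx⟩)

lemma pvars_substPairs {x : ℕ} {t : FOTerm L} (l : List (FOTerm L × FOTerm L)) :
    pvars (substPairs x t l) ⊆ (pvars l \ {x}) ∪ t.vars := by
  intro a ha
  rcases mem_pvars.1 ha with ⟨p, hp, hap⟩
  rcases List.mem_map.1 hp with ⟨q, hq, rfl⟩
  have : a ∈ (q.1.vars \ {x} ∪ t.vars) ∪ (q.2.vars \ {x} ∪ t.vars) := by
    rcases Finset.mem_union.1 hap with h | h
    · exact Finset.mem_union_left _ (vars_applyT_sub1 q.1 h)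
    · exact Finset.mem_union_right _ (vars_applyT_sub1 q.2 h)
  rcases Finset.mem_union.1 this with h | h <;> rcases Finset.mem_union.1 h with h | h
  · refine Finset.mem_union_left _ (Finset.mem_sdiff.2 ⟨?_, (Finset.mem_sdiff.1 h).2⟩)
    exact mem_pvars.2 ⟨q, hq, Finset.mem_union_left _ (Finset.mem_sdiff.1 h).1⟩
  · exact Finset.mem_union_right _ h
  · refine Finset.mem_union_left _ (Finset.mem_sdiff.2 ⟨?_, (Finset.mem_sdiff.1 h).2⟩)
    exact mem_pvars.2 ⟨q, hq, Finset.mem_union_right _ (Finset.mem_sdiff.1 h).1⟩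
  · exact Finset.mem_union_right _ h

end UnifAux


section Unify

variable {L : FOLang}

def SolvesP (N : FOStruc L) (g : ℕ → N.carrier) (l : List (FOTerm L × FOTerm L)) : Prop :=
  ∀ p ∈ l, p.1.eval N g = p.2.eval N g

def SolvesS (N : FOStruc L) (g : ℕ → N.carrier) (σ : List (ℕ × FOTerm L)) : Prop :=
  ∀ p ∈ σ, g p.1 = p.2.eval N g

def SolvedL (σ : List (ℕ × FOTerm L)) : Prop :=
  (σ.map Prod.fst).Nodup ∧ ∀ p ∈ σ, ∀ q ∈ σ, (p.1 : ℕ) ∉ (q.2 : FOTerm L).vars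

def subL (σ : List (ℕ × FOTerm L)) : ℕ → FOTerm L :=
  fun y => (σ.lookup y).getD (.var y)

def svars : List (ℕ × FOTerm L) → Finset ℕ
  | [] => ∅
  | p :: rest => insert p.1 (p.2.vars ∪ svars rest)

lemma mem_svars {a : ℕ} : ∀ {σ : List (ℕ × FOTerm L)},
    a ∈ svars σ ↔ ∃ p ∈ σ, a = p.1 ∨ a ∈ (p.2 : FOTerm L).vars
  | [] => by simp [svars]
  | p :: rest => by
      simp [svars, mem_svars (σ := rest), Finset.mem_union, or_assoc]

open Classical in
noncomputable def unify : List (FOTerm L × FOTerm L) → Option (List (ℕ × FOTerm L))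
  | [] => some []
  | (FOTerm.var x, t) :: rest =>
      if t = FOTerm.var x then unify rest
      else if x ∈ t.vars then none
      else (unify (substPairs x t rest)).map fun σ => (x, t.applyT (subL σ)) :: σ
  | (FOTerm.func f ss, FOTerm.var y) :: rest =>
      if y ∈ (FOTerm.func f ss).vars then none
      else (unify (substPairs y (FOTerm.func f ss) rest)).map
        fun σ => (y, (FOTerm.func f ss).applyT (subL σ)) :: σ
  | (FOTerm.func f ss, FOTerm.func g ts) :: rest =>
      if h : f = g then
        unify (((List.finRange (L.farity f)).map
          fun i => ((ss i : FOTerm L), ts (Fin.cast (by rw [h]) i))) ++ rest)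
      else none
  termination_by l => ((pvars l).card, psize l)
  decreasing_by
  · have h1 : pvars rest ⊆ pvars ((FOTerm.var x, t) :: rest) := by
      intro a ha; simp only [pvars]; exact Finset.mem_union_right _ ha
    have h2 : psize rest < psize ((FOTerm.var x, t) :: rest) := by
      simp only [psize, List.map_cons, List.sum_cons]
      have := FOTerm.tsize_pos (FOTerm.var x : FOTerm L)
      have := FOTerm.tsize_pos t
      omega
    rcases lt_or_eq_of_le (Finset.card_le_card h1) with h | h
    · exact Prod.Lex.left _ _ h
    · rw [h]; exact Prod.Lex.right _ h2
  · rename_i hocc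
    apply Prod.Lex.left
    apply Finset.card_lt_card
    constructor
    · intro a ha
      have h3 := pvars_substPairs (x := x) (t := t) rest ha
      simp only [pvars]
      rcases Finset.mem_union.1 h3 with h | h
      · exact Finset.mem_union_right _ (Finset.mem_sdiff.1 h).1
      · exact Finset.mem_union_left _ (Finset.mem_union_right _ h)
    · intro hsub
      have hx : x ∈ pvars ((FOTerm.var x, t) :: rest) := by
        simp [pvars, FOTerm.vars]
      have h4 := pvars_substPairs (x := x) (t := t) rest (hsub hx)
      rcases Finset.mem_union.1 h4 with h | h
      · exact (Finset.mem_sdiff.1 h).2 (Finset.mem_singleton_self x)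
      · exact hocc h
  · rename_i hocc
    apply Prod.Lex.left
    apply Finset.card_lt_card
    constructor
    · intro a ha
      have h3 := pvars_substPairs (x := y) (t := FOTerm.func f ss) rest ha
      simp only [pvars]
      rcases Finset.mem_union.1 h3 with h | h
      · exact Finset.mem_union_right _ (Finset.mem_sdiff.1 h).1
      · exact Finset.mem_union_left _ (Finset.mem_union_left _ h)
    · intro hsub
      have hy : y ∈ pvars ((FOTerm.func f ss, FOTerm.var y) :: rest) := by
        simp [pvars, FOTerm.vars]
      have h4 := pvars_substPairs (x := y) (t := FOTerm.func f ss) rest (hsub hy)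
      rcases Finset.mem_union.1 h4 with h | h
      · exact (Finset.mem_sdiff.1 h).2 (Finset.mem_singleton_self y)
      · exact hocc h
  · subst h
    simp only [Fin.cast_eq_self]
    have h1 : pvars (((List.finRange (L.farity f)).map
        fun i => ((ss i : FOTerm L), ts i)) ++ rest)
        ⊆ pvars ((FOTerm.func f ss, FOTerm.func f ts) :: rest) := by
      intro a ha
      rcases mem_pvars.1 ha with ⟨p, hp, hap⟩
      simp only [pvars, Finset.mem_union]
      rcases List.mem_append.1 hp with hp | hp
      · rcases List.mem_map.1 hp with ⟨i, _, rfl⟩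
        left
        rcases Finset.mem_union.1 hap with h | h
        · left
          simp only [FOTerm.vars, Finset.mem_biUnion, Finset.mem_univ, true_and]
          exact ⟨i, h⟩
        · right
          simp only [FOTerm.vars, Finset.mem_biUnion, Finset.mem_univ, true_and]
          exact ⟨i, h⟩
      · right
        exact mem_pvars.2 ⟨p, hp, hap⟩
    have h2 : psize (((List.finRange (L.farity f)).map
        fun i => ((ss i : FOTerm L), ts i)) ++ rest)
        < psize ((FOTerm.func f ss, FOTerm.func f ts) :: rest) := by
      simp only [psize, List.map_cons, List.sum_cons, List.map_append, List.sum_append,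
        List.map_map]
      have e1 : ((List.finRange (L.farity f)).map
          ((fun p : FOTerm L × FOTerm L => p.1.tsize + p.2.tsize) ∘
            fun i => ((ss i : FOTerm L), ts i))).sum
          = ∑ i, ((ss i).tsize + (ts i).tsize) := by
        rw [Fin.sum_univ_def]; simp [Function.comp_def]
      rw [e1]
      simp only [FOTerm.tsize, Finset.sum_add_distrib]
      omega
    rcases lt_or_eq_of_le (Finset.card_le_card h1) with h | h
    · exact Prod.Lex.left _ _ h
    · rw [h]; exact Prod.Lex.right _ h2

end Unify

section UnifCorrect

variable {L : FOLang}

lemma subL_of_mem {σ : List (ℕ × FOTerm L)} (hnd : (σ.map Prod.fst).Nodup)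
    {x : ℕ} {s : FOTerm L} (hmem : (x, s) ∈ σ) : subL σ x = s := by
  induction σ with
  | nil => cases hmem
  | cons p rest ih =>
    rcases List.mem_cons.1 hmem with h | h
    · cases h
      simp [subL, List.lookup]
    · have hnd' := hnd
      simp only [List.map_cons, List.nodup_cons] at hnd'
      have hne : x ≠ p.1 := by
        intro he
        exact hnd'.1 (he ▸ (List.mem_map.2 ⟨(x, s), h, rfl⟩))
      have : (x == p.1) = false := beq_eq_false_iff_ne.mpr hne
      simp only [subL, List.lookup, this]
      exact ih hnd'.2 h

lemma subL_of_not_mem {σ : List (ℕ × FOTerm L)} {x : ℕ}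
    (hx : x ∉ σ.map Prod.fst) : subL σ x = .var x := by
  simp [subL, lookup_eq_none_of_not_mem x σ hx]

lemma eval_subL_of_solves {N : FOStruc L} {g : ℕ → N.carrier} {σ : List (ℕ × FOTerm L)}
    (hnd : (σ.map Prod.fst).Nodup) (hs : SolvesS N g σ) (y : ℕ) :
    (subL σ y).eval N g = g y := by
  by_cases hy : y ∈ σ.map Prod.fst
  · rcases List.mem_map.1 hy with ⟨p, hp, rfl⟩
    rw [subL_of_mem hnd (by exact hp)]
    exact (hs p hp).symm
  · rw [subL_of_not_mem hy]; rfl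

lemma eval_applyT_sub1 {N : FOStruc L} {g : ℕ → N.carrier} {x : ℕ} {t : FOTerm L}
    (hgx : g x = t.eval N g) (s : FOTerm L) :
    (s.applyT (sub1 x t)).eval N g = s.eval N g := by
  rw [FOTerm.eval_applyT]
  apply FOTerm.eval_congr
  intro y _
  by_cases hy : y = x
  · subst hy; simp [sub1, hgx.symm]
  · simp [sub1, hy, FOTerm.eval]

lemma solvesP_substPairs {N : FOStruc L} {g : ℕ → N.carrier} {x : ℕ} {t : FOTerm L}
    (hgx : g x = t.eval N g) (rest : List (FOTerm L × FOTerm L)) :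
    SolvesP N g (substPairs x t rest) ↔ SolvesP N g rest := by
  constructor
  · intro hsol p hp
    have := hsol (p.1.applyT (sub1 x t), p.2.applyT (sub1 x t))
      (List.mem_map.2 ⟨p, hp, rfl⟩)
    simpa [eval_applyT_sub1 hgx] using this
  · intro hsol p hp
    rcases List.mem_map.1 hp with ⟨q, hq, rfl⟩
    simp only [eval_applyT_sub1 hgx]
    exact hsol q hq

lemma mem_of_lookup_eq_some {σ : List (ℕ × FOTerm L)} {y : ℕ} {s : FOTerm L}
    (h : σ.lookup y = some s) : (y, s) ∈ σ := by
  induction σ with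
  | nil => simp [List.lookup] at h
  | cons p rest ih =>
    by_cases hy : y = p.1
    · subst hy
      simp only [List.lookup, beq_self_eq_true] at h
      cases p
      cases h
      exact List.mem_cons_self
    · have : (y == p.1) = false := beq_eq_false_iff_ne.mpr hy
      simp only [List.lookup, this] at h
      exact List.mem_cons_of_mem _ (ih h)

lemma vars_subL_subset {σ : List (ℕ × FOTerm L)} (y : ℕ) :
    (subL σ y).vars ⊆ insert y (svars σ) := by
  by_cases hy : y ∈ σ.map Prod.fst
  · rcases List.mem_map.1 hy with ⟨p, hp, rfl⟩
    intro a ha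
    by_cases hnd : (σ.map Prod.fst).Nodup
    · rw [subL_of_mem hnd hp] at ha
      exact Finset.mem_insert_of_mem (mem_svars.2 ⟨p, hp, Or.inr ha⟩)
    · -- might not be nodup; handle by lookup membership
      rcases h : σ.lookup p.1 with _ | s
      · simp [subL, h, FOTerm.vars] at ha
        simp [ha]
      · have hmem : (p.1, s) ∈ σ := mem_of_lookup_eq_some h
        simp only [subL, h, Option.getD_some] at ha
        exact Finset.mem_insert_of_mem (mem_svars.2 ⟨(p.1, s), hmem, Or.inr ha⟩)
  · rw [subL_of_not_mem hy]
    intro a ha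
    simp only [FOTerm.vars, Finset.mem_singleton] at ha
    simp [ha]

end UnifCorrect

section UnifCorrect2

variable {L : FOLang}

lemma vars_applyT_subL {σ : List (ℕ × FOTerm L)} (hnd : (σ.map Prod.fst).Nodup)
    {s : FOTerm L} {a : ℕ} (ha : a ∈ (s.applyT (subL σ)).vars) :
    (a ∈ s.vars ∧ a ∉ σ.map Prod.fst) ∨ ∃ q ∈ σ, a ∈ (q.2 : FOTerm L).vars := by
  rw [FOTerm.vars_applyT] at ha
  rcases Finset.mem_biUnion.1 ha with ⟨y, hy, hay⟩
  by_cases hk : y ∈ σ.map Prod.fst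
  · rcases List.mem_map.1 hk with ⟨p, hp, rfl⟩
    rw [subL_of_mem hnd hp] at hay
    exact Or.inr ⟨p, hp, hay⟩
  · rw [subL_of_not_mem hk] at hay
    simp only [FOTerm.vars, Finset.mem_singleton] at hay
    subst hay
    exact Or.inl ⟨hy, hk⟩

lemma eval_applyT_subL_of_solves {N : FOStruc L} {g : ℕ → N.carrier}
    {σ : List (ℕ × FOTerm L)} (hnd : (σ.map Prod.fst).Nodup)
    (hs : SolvesS N g σ) (s : FOTerm L) :
    (s.applyT (subL σ)).eval N g = s.eval N g := by
  rw [FOTerm.eval_applyT]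
  exact FOTerm.eval_congr fun y _ => eval_subL_of_solves hnd hs y

lemma solvesP_cons {N : FOStruc L} {g : ℕ → N.carrier} {p : FOTerm L × FOTerm L}
    {rest : List (FOTerm L × FOTerm L)} :
    SolvesP N g (p :: rest) ↔ (p.1.eval N g = p.2.eval N g) ∧ SolvesP N g rest := by
  constructor
  · exact fun h => ⟨h p (List.mem_cons_self), fun q hq => h q (List.mem_cons_of_mem _ hq)⟩
  · rintro ⟨h1, h2⟩ q hq
    rcases List.mem_cons.1 hq with rfl | hq
    · exact h1
    · exact h2 q hq

lemma solvesS_cons {N : FOStruc L} {g : ℕ → N.carrier} {p : ℕ × FOTerm L}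
    {σ : List (ℕ × FOTerm L)} :
    SolvesS N g (p :: σ) ↔ (g p.1 = p.2.eval N g) ∧ SolvesS N g σ := by
  constructor
  · exact fun h => ⟨h p (List.mem_cons_self), fun q hq => h q (List.mem_cons_of_mem _ hq)⟩
  · rintro ⟨h1, h2⟩ q hq
    rcases List.mem_cons.1 hq with rfl | hq
    · exact h1
    · exact h2 q hq

lemma not_mem_pvars_substPairs {x : ℕ} {t : FOTerm L} (hx : x ∉ t.vars)
    (rest : List (FOTerm L × FOTerm L)) : x ∉ pvars (substPairs x t rest) := by
  intro h
  rcases Finset.mem_union.1 (pvars_substPairs rest h) with h | h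
  · exact (Finset.mem_sdiff.1 h).2 (Finset.mem_singleton_self x)
  · exact hx h

end UnifCorrect2

section UnifCorrect3

variable {L : FOLang}

lemma varElim_correct {x : ℕ} {t : FOTerm L} {rest : List (FOTerm L × FOTerm L)}
    (hxt : x ∉ t.vars) {σ : List (ℕ × FOTerm L)}
    (hS : SolvedL σ) (hv : svars σ ⊆ pvars (substPairs x t rest))
    (hiff : ∀ N : FOStruc L, IsFEA N → ∀ g,
      (SolvesP N g (substPairs x t rest) ↔ SolvesS N g σ)) :
    SolvedL ((x, t.applyT (subL σ)) :: σ) ∧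
    svars ((x, t.applyT (subL σ)) :: σ) ⊆ insert x (t.vars ∪ pvars rest) ∧
    ∀ N : FOStruc L, IsFEA N → ∀ g,
      ((g x = t.eval N g ∧ SolvesP N g rest) ↔
        SolvesS N g ((x, t.applyT (subL σ)) :: σ)) := by
  have hx' : x ∉ pvars (substPairs x t rest) := not_mem_pvars_substPairs hxt rest
  have hxs : x ∉ svars σ := fun h => hx' (hv h)
  have hkeys : ∀ k ∈ σ.map Prod.fst, k ∈ svars σ := by
    intro k hk
    rcases List.mem_map.1 hk with ⟨p, hp, rfl⟩
    exact mem_svars.2 ⟨p, hp, Or.inl rfl⟩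
  have hsv_sub : ∀ a ∈ svars σ, a ∈ t.vars ∪ pvars rest := by
    intro a ha
    rcases Finset.mem_union.1 (pvars_substPairs rest (hv ha)) with h | h
    · exact Finset.mem_union_right _ (Finset.mem_sdiff.1 h).1
    · exact Finset.mem_union_left _ h
  have hxnotapply : x ∉ (t.applyT (subL σ)).vars := by
    intro h
    rcases vars_applyT_subL hS.1 h with ⟨h1, _⟩ | ⟨q, hq, h2⟩
    · exact hxt h1
    · exact hxs (mem_svars.2 ⟨q, hq, Or.inr h2⟩)
  refine ⟨⟨?_, ?_⟩, ?_, ?_⟩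
  · -- nodup keys
    simp only [List.map_cons, List.nodup_cons]
    exact ⟨fun h => hxs (hkeys x h), hS.1⟩
  · -- keys not in rhs
    intro p hp q hq
    rcases List.mem_cons.1 hp with rfl | hp <;> rcases List.mem_cons.1 hq with rfl | hq
    · exact hxnotapply
    · exact fun h => hxs (mem_svars.2 ⟨q, hq, Or.inr h⟩)
    · intro h
      rcases vars_applyT_subL hS.1 h with ⟨_, h2⟩ | ⟨q', hq', h2⟩
      · exact h2 (List.mem_map.2 ⟨p, hp, rfl⟩)
      · exact hS.2 p hp q' hq' h2
    · exact hS.2 p hp q hq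
  · -- svars subset
    intro a ha
    simp only [svars, Finset.mem_insert, Finset.mem_union] at ha
    rcases ha with rfl | ha | ha
    · exact Finset.mem_insert_self _ _
    · rcases vars_applyT_subL hS.1 ha with ⟨h1, _⟩ | ⟨q, hq, h2⟩
      · exact Finset.mem_insert_of_mem (Finset.mem_union_left _ h1)
      · exact Finset.mem_insert_of_mem (hsv_sub a (mem_svars.2 ⟨q, hq, Or.inr h2⟩))
    · exact Finset.mem_insert_of_mem (hsv_sub a ha)
  · -- equivalence
    intro N hN g
    constructor
    · rintro ⟨hgx, hrest⟩
      have hl' : SolvesP N g (substPairs x t rest) :=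
        (solvesP_substPairs hgx rest).2 hrest
      have hσ := (hiff N hN g).1 hl'
      refine solvesS_cons.2 ⟨?_, hσ⟩
      rw [eval_applyT_subL_of_solves hS.1 hσ]
      exact hgx
    · intro hs'
      obtain ⟨hhead, hσ⟩ := solvesS_cons.1 hs'
      have hgx : g x = t.eval N g := by
        rw [hhead, eval_applyT_subL_of_solves hS.1 hσ]
      exact ⟨hgx, (solvesP_substPairs hgx rest).1 ((hiff N hN g).2 hσ)⟩

lemma pvars_append_subset {l1 l2 : List (FOTerm L × FOTerm L)} {s : Finset ℕ}
    (h1 : ∀ a ∈ pvars l1, a ∈ s) (h2 : ∀ a ∈ pvars l2, a ∈ s) :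
    ∀ a ∈ pvars (l1 ++ l2), a ∈ s := by
  intro a ha
  rcases mem_pvars.1 ha with ⟨p, hp, hap⟩
  rcases List.mem_append.1 hp with hp | hp
  · exact h1 a (mem_pvars.2 ⟨p, hp, hap⟩)
  · exact h2 a (mem_pvars.2 ⟨p, hp, hap⟩)

lemma solvesP_append {N : FOStruc L} {g : ℕ → N.carrier}
    {l1 l2 : List (FOTerm L × FOTerm L)} :
    SolvesP N g (l1 ++ l2) ↔ SolvesP N g l1 ∧ SolvesP N g l2 := by
  constructor
  · exact fun h => ⟨fun p hp => h p (List.mem_append_left _ hp),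
      fun p hp => h p (List.mem_append_right _ hp)⟩
  · rintro ⟨h1, h2⟩ p hp
    rcases List.mem_append.1 hp with hp | hp
    · exact h1 p hp
    · exact h2 p hp

theorem unify_correct (l : List (FOTerm L × FOTerm L)) :
    (unify l = none → ∀ N : FOStruc L, IsFEA N → ∀ g, ¬ SolvesP N g l) ∧
    (∀ σ, unify l = some σ →
      SolvedL σ ∧ svars σ ⊆ pvars l ∧
      ∀ N : FOStruc L, IsFEA N → ∀ g, (SolvesP N g l ↔ SolvesS N g σ)) := by
  induction l using unify.induct with
  | case1 =>
    refine ⟨fun h => by simp [unify] at h, fun σ hσ => ?_⟩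
    simp only [unify, Option.some.injEq] at hσ
    subst hσ
    refine ⟨⟨by simp, by simp⟩, by simp [svars], fun N hN g => ?_⟩
    simp [SolvesP, SolvesS]
  | case2 x rest ih =>
    have hu : unify ((FOTerm.var x, FOTerm.var x) :: rest) = unify rest := by
      rw [unify.eq_def]
      simp
    rw [hu]
    constructor
    · intro h N hN g hs
      exact ih.1 h N hN g (fun p hp => hs p (List.mem_cons_of_mem _ hp))
    · intro σ hσ
      obtain ⟨hS, hv, hiff⟩ := ih.2 σ hσ
      refine ⟨hS, fun a ha => ?_, fun N hN g => ?_⟩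
      · simp only [pvars]
        exact Finset.mem_union_right _ (hv ha)
      · rw [← hiff N hN g]
        rw [solvesP_cons]
        simp
  | case3 x t rest ht hocc =>
    have hu : unify ((FOTerm.var x, t) :: rest) = none := by
      rw [unify.eq_def]
      simp [ht, hocc]
    rw [hu]
    refine ⟨fun _ N hN g hs => ?_, fun σ hσ => by simp at hσ⟩
    have := hs (FOTerm.var x, t) (List.mem_cons_self)
    exact hN.occ x t ht hocc g this
  | case4 x t rest ht hocc ih =>
    have hu : unify ((FOTerm.var x, t) :: rest) =
        (unify (substPairs x t rest)).map fun σ => (x, t.applyT (subL σ)) :: σ := by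
      rw [unify.eq_def]
      simp [ht, hocc]
    rw [hu]
    constructor
    · intro h N hN g hs
      rw [Option.map_eq_none_iff] at h
      rw [solvesP_cons] at hs
      have hgx : g x = t.eval N g := hs.1
      exact ih.1 h N hN g ((solvesP_substPairs hgx rest).2 hs.2)
    · intro σ' hσ'
      rw [Option.map_eq_some_iff] at hσ'
      obtain ⟨σ, hσ, rfl⟩ := hσ'
      obtain ⟨hS, hv, hiff⟩ := ih.2 σ hσ
      obtain ⟨hS', hv', hiff'⟩ := varElim_correct hocc hS hv hiff
      refine ⟨hS', fun a ha => ?_, fun N hN g => ?_⟩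
      · have := hv' ha
        simp only [pvars, FOTerm.vars, Finset.mem_union, Finset.mem_insert] at this ⊢
        rcases this with rfl | h | h
        · exact Or.inl (Or.inl (Finset.mem_singleton_self _))
        · exact Or.inl (Or.inr h)
        · exact Or.inr h
      · rw [← hiff' N hN g, solvesP_cons]
        simp [FOTerm.eval]
  | case5 f ss y rest hocc =>
    have hu : unify ((FOTerm.func f ss, FOTerm.var y) :: rest) = none := by
      rw [unify.eq_def]
      simp [hocc]
    rw [hu]
    refine ⟨fun _ N hN g hs => ?_, fun σ hσ => by simp at hσ⟩
    have h1 := hs (FOTerm.func f ss, FOTerm.var y) (List.mem_cons_self)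
    exact hN.occ y (FOTerm.func f ss) (by intro h; cases h) hocc g h1.symm
  | case6 f ss y rest hocc ih =>
    have hu : unify ((FOTerm.func f ss, FOTerm.var y) :: rest) =
        (unify (substPairs y (FOTerm.func f ss) rest)).map
          fun σ => (y, (FOTerm.func f ss).applyT (subL σ)) :: σ := by
      rw [unify.eq_def]
      simp [hocc]
    rw [hu]
    constructor
    · intro h N hN g hs
      rw [Option.map_eq_none_iff] at h
      rw [solvesP_cons] at hs
      have hgx : g y = (FOTerm.func f ss).eval N g := hs.1.symm
      exact ih.1 h N hN g ((solvesP_substPairs hgx rest).2 hs.2)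
    · intro σ' hσ'
      rw [Option.map_eq_some_iff] at hσ'
      obtain ⟨σ, hσ, rfl⟩ := hσ'
      obtain ⟨hS, hv, hiff⟩ := ih.2 σ hσ
      obtain ⟨hS', hv', hiff'⟩ := varElim_correct hocc hS hv hiff
      refine ⟨hS', fun a ha => ?_, fun N hN g => ?_⟩
      · have := hv' ha
        simp only [pvars, FOTerm.vars, Finset.mem_union, Finset.mem_insert] at this ⊢
        rcases this with rfl | h | h
        · exact Or.inl (Or.inr (Finset.mem_singleton_self _))
        · exact Or.inl (Or.inl h)
        · exact Or.inr h
      · rw [← hiff' N hN g, solvesP_cons]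
        constructor
        · rintro ⟨h1, h2⟩
          exact ⟨h1.symm, h2⟩
        · rintro ⟨h1, h2⟩
          exact ⟨h1.symm, h2⟩
  | case7 f ts rest ss ih =>
    have hu : unify ((FOTerm.func f ss, FOTerm.func f ts) :: rest) =
        unify (((List.finRange (L.farity f)).map
          fun i => ((ss i : FOTerm L), ts i)) ++ rest) := by
      rw [unify.eq_def]
      simp
    simp only [Fin.cast_eq_self] at ih
    rw [hu]
    have hequiv : ∀ (N : FOStruc L), IsFEA N → ∀ g,
        (SolvesP N g ((FOTerm.func f ss, FOTerm.func f ts) :: rest) ↔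
          SolvesP N g (((List.finRange (L.farity f)).map
            fun i => ((ss i : FOTerm L), ts i)) ++ rest)) := by
      intro N hN g
      rw [solvesP_cons, solvesP_append]
      have hzip : SolvesP N g ((List.finRange (L.farity f)).map
          fun i => ((ss i : FOTerm L), ts i)) ↔
          ∀ i, (ss i).eval N g = (ts i).eval N g := by
        constructor
        · intro h i
          exact h (ss i, ts i) (List.mem_map.2 ⟨i, List.mem_finRange i, rfl⟩)
        · intro h p hp
          rcases List.mem_map.1 hp with ⟨i, _, rfl⟩
          exact h i
      rw [hzip]
      have hhead : (FOTerm.func f ss).eval N g = (FOTerm.func f ts).eval N g ↔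
          ∀ i, (ss i).eval N g = (ts i).eval N g := by
        simp only [FOTerm.eval]
        constructor
        · intro h i
          have := hN.inj f h
          exact congrFun this i
        · intro h
          congr 1
          funext i
          exact h i
      rw [hhead]
    have hpv : ∀ a ∈ pvars (((List.finRange (L.farity f)).map
        fun i => ((ss i : FOTerm L), ts i)) ++ rest),
        a ∈ pvars ((FOTerm.func f ss, FOTerm.func f ts) :: rest) := by
      apply pvars_append_subset
      · intro a ha
        rcases mem_pvars.1 ha with ⟨p, hp, hap⟩
        rcases List.mem_map.1 hp with ⟨i, _, rfl⟩
        simp only [pvars, Finset.mem_union]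
        rcases Finset.mem_union.1 hap with h | h
        · refine Or.inl (Or.inl ?_)
          simp only [FOTerm.vars, Finset.mem_biUnion, Finset.mem_univ, true_and]
          exact ⟨i, h⟩
        · refine Or.inl (Or.inr ?_)
          simp only [FOTerm.vars, Finset.mem_biUnion, Finset.mem_univ, true_and]
          exact ⟨i, h⟩
      · intro a ha
        simp only [pvars, Finset.mem_union]
        exact Or.inr ha
    constructor
    · intro h N hN g hs
      exact ih.1 h N hN g ((hequiv N hN g).1 hs)
    · intro σ hσ
      obtain ⟨hS, hv, hiff⟩ := ih.2 σ hσ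
      exact ⟨hS, fun a ha => hpv a (hv ha), fun N hN g =>
        (hequiv N hN g).trans (hiff N hN g)⟩
  | case8 f ss g ts rest hne =>
    have hu : unify ((FOTerm.func f ss, FOTerm.func g ts) :: rest) = none := by
      rw [unify.eq_def]
      simp [hne]
    rw [hu]
    refine ⟨fun _ N hN gg hs => ?_, fun σ hσ => by simp at hσ⟩
    have h1 := hs (FOTerm.func f ss, FOTerm.func g ts) (List.mem_cons_self)
    exact hN.disj f g hne _ _ h1

end UnifCorrect3

section NormalForm

variable {L : FOLang}

/-- characterization of an EQ-formula by bound variables and a list of equations -/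
def CharOf (E : FOForm L) (V : Finset ℕ) (eqs : List (FOTerm L × FOTerm L)) : Prop :=
  V ∩ E.fv = ∅ ∧ (pvars eqs ⊆ V ∪ E.fv) ∧
  ∀ (N : FOStruc L) (h : ℕ → N.carrier),
    ESat N h E ↔ ∃ g : ℕ → N.carrier, (∀ x ∉ V, g x = h x) ∧ SolvesP N g eqs

lemma renameChar {E : FOForm L} {V : Finset ℕ} {eqs : List (FOTerm L × FOTerm L)}
    (hc : CharOf E V eqs) (B : Finset ℕ) :
    ∃ V₂ eqs₂, CharOf E V₂ eqs₂ ∧ V₂ ∩ B = ∅ := by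
  obtain ⟨hVfv, hpv, hchar⟩ := hc
  classical
  set n : ℕ := (B ∪ E.fv ∪ V ∪ pvars eqs).sup id + 1 with hn
  have hbig : ∀ a ∈ B ∪ E.fv ∪ V ∪ pvars eqs, a < n := by
    intro a ha
    have := Finset.le_sup (f := id) ha
    simp only [id] at this
    omega
  set lst : List ℕ := V.sort (· ≤ ·) with hlst
  set π : ℕ → ℕ := fun x => if x ∈ V then n + lst.idxOf x else x with hπ
  set V₂ : Finset ℕ := V.image π with hV₂
  have hπ_mem : ∀ x ∈ V, π x ∈ V₂ := fun x hx => Finset.mem_image_of_mem π hx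
  have hπ_id : ∀ x ∉ V, π x = x := by
    intro x hx; simp [hπ, hx]
  have hV₂_big : ∀ y ∈ V₂, n ≤ y := by
    intro y hy
    rcases Finset.mem_image.1 hy with ⟨x, hx, rfl⟩
    simp only [hπ, if_pos hx]
    omega
  have hV₂B : V₂ ∩ B = ∅ := by
    apply Finset.eq_empty_of_forall_notMem
    intro a ha
    rcases Finset.mem_inter.1 ha with ⟨h1, h2⟩
    have := hbig a (by simp [h2])
    have := hV₂_big a h1
    omega
  have hV₂fv : V₂ ∩ E.fv = ∅ := by
    apply Finset.eq_empty_of_forall_notMem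
    intro a ha
    rcases Finset.mem_inter.1 ha with ⟨h1, h2⟩
    have := hbig a (by simp [h2])
    have := hV₂_big a h1
    omega
  set ι : ℕ → ℕ := fun y => lst.getD (y - n) 0 with hι
  have hmem_lst : ∀ x, x ∈ lst ↔ x ∈ V := fun x => Finset.mem_sort _
  have hιπ : ∀ x ∈ V, ι (π x) = x := by
    intro x hx
    have hxl : x ∈ lst := (hmem_lst x).2 hx
    have hidx : lst.idxOf x < lst.length := List.idxOf_lt_length_iff.2 hxl
    simp only [hι, hπ, if_pos hx, Nat.add_sub_cancel_left]
    rw [List.getD_eq_getElem lst 0 hidx]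
    exact List.getElem_idxOf hidx
  set ρ : ℕ → FOTerm L := fun x => FOTerm.var (π x) with hρ
  set eqs₂ : List (FOTerm L × FOTerm L) :=
    eqs.map (fun p => (p.1.applyT ρ, p.2.applyT ρ)) with heqs₂
  have heval : ∀ (N : FOStruc L) (g : ℕ → N.carrier) (s : FOTerm L),
      (s.applyT ρ).eval N g = s.eval N (fun x => g (π x)) := by
    intro N g s
    rw [FOTerm.eval_applyT]
    rfl
  have hvars₂ : pvars eqs₂ ⊆ V₂ ∪ E.fv := by
    intro a ha
    rcases mem_pvars.1 ha with ⟨p, hp, hap⟩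
    rcases List.mem_map.1 hp with ⟨q, hq, rfl⟩
    have key : ∀ s : FOTerm L, s.vars ⊆ V ∪ E.fv → a ∈ (s.applyT ρ).vars →
        a ∈ V₂ ∪ E.fv := by
      intro s hs has
      rw [FOTerm.vars_applyT] at has
      rcases Finset.mem_biUnion.1 has with ⟨y, hy, hay⟩
      simp only [hρ, FOTerm.vars, Finset.mem_singleton] at hay
      subst hay
      rcases Finset.mem_union.1 (hs hy) with h | h
      · exact Finset.mem_union_left _ (hπ_mem y h)
      · have hyV : y ∉ V := by
          intro hyV
          have := Finset.eq_empty_iff_forall_notMem.1 hVfv y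
          exact this (Finset.mem_inter.2 ⟨hyV, h⟩)
        rw [hπ_id y hyV]
        exact Finset.mem_union_right _ h
    have h1 : q.1.vars ⊆ V ∪ E.fv := fun b hb =>
      hpv (mem_pvars.2 ⟨q, hq, Finset.mem_union_left _ hb⟩)
    have h2 : q.2.vars ⊆ V ∪ E.fv := fun b hb =>
      hpv (mem_pvars.2 ⟨q, hq, Finset.mem_union_right _ hb⟩)
    rcases Finset.mem_union.1 hap with h | h
    · exact key q.1 h1 h
    · exact key q.2 h2 h
  refine ⟨V₂, eqs₂, ⟨hV₂fv, hvars₂, ?_⟩, hV₂B⟩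
  intro N h
  rw [hchar N h]
  constructor
  · rintro ⟨g, hgh, hsol⟩
    refine ⟨fun y => if y ∈ V₂ then g (ι y) else h y, fun y hy => by simp [hy], ?_⟩
    intro p hp
    rcases List.mem_map.1 hp with ⟨q, hq, rfl⟩
    have hagree : ∀ x ∈ V ∪ E.fv,
        (if π x ∈ V₂ then g (ι (π x)) else h (π x)) = g x := by
      intro x hx
      rcases Finset.mem_union.1 hx with hxV | hxfv
      · rw [if_pos (hπ_mem x hxV), hιπ x hxV]
      · have hxV : x ∉ V := by
          intro hxV
          exact Finset.eq_empty_iff_forall_notMem.1 hVfv x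
            (Finset.mem_inter.2 ⟨hxV, hxfv⟩)
        rw [hπ_id x hxV]
        have : x ∉ V₂ := by
          intro hx2
          have := hV₂_big x hx2
          have := hbig x (by simp [hxfv])
          omega
        rw [if_neg this]
        exact (hgh x hxV).symm
    simp only [heval]
    have e1 : q.1.eval N (fun x => if π x ∈ V₂ then g (ι (π x)) else h (π x)) =
        q.1.eval N g := FOTerm.eval_congr fun x hx => hagree x
      (hpv (mem_pvars.2 ⟨q, hq, Finset.mem_union_left _ hx⟩))
    have e2 : q.2.eval N (fun x => if π x ∈ V₂ then g (ι (π x)) else h (π x)) =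
        q.2.eval N g := FOTerm.eval_congr fun x hx => hagree x
      (hpv (mem_pvars.2 ⟨q, hq, Finset.mem_union_right _ hx⟩))
    rw [show (fun x => if π x ∈ V₂ then g (ι (π x)) else h (π x)) =
      fun x => (fun y => if y ∈ V₂ then g (ι y) else h y) (π x) from rfl] at e1 e2
    rw [e1, e2]
    exact hsol q hq
  · rintro ⟨g₂, hgh, hsol⟩
    refine ⟨fun x => if x ∈ V then g₂ (π x) else h x, fun y hy => by simp [hy], ?_⟩
    intro p hp
    have hagree : ∀ x ∈ V ∪ E.fv,
        (if x ∈ V then g₂ (π x) else h x) = g₂ (π x) := by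
      intro x hx
      rcases Finset.mem_union.1 hx with hxV | hxfv
      · rw [if_pos hxV]
      · have hxV : x ∉ V := by
          intro hxV
          exact Finset.eq_empty_iff_forall_notMem.1 hVfv x
            (Finset.mem_inter.2 ⟨hxV, hxfv⟩)
        rw [if_neg hxV, hπ_id x hxV]
        have hx2 : x ∉ V₂ := by
          intro hx2
          have := hV₂_big x hx2
          have := hbig x (by simp [hxfv])
          omega
        exact (hgh x hx2).symm
    have hsol' := hsol (p.1.applyT ρ, p.2.applyT ρ) (List.mem_map.2 ⟨p, hp, rfl⟩)
    simp only [heval] at hsol'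
    have e1 : p.1.eval N (fun x => if x ∈ V then g₂ (π x) else h x) =
        p.1.eval N (fun x => g₂ (π x)) := FOTerm.eval_congr fun x hx => hagree x
      (hpv (mem_pvars.2 ⟨p, hp, Finset.mem_union_left _ hx⟩))
    have e2 : p.2.eval N (fun x => if x ∈ V then g₂ (π x) else h x) =
        p.2.eval N (fun x => g₂ (π x)) := FOTerm.eval_congr fun x hx => hagree x
      (hpv (mem_pvars.2 ⟨p, hp, Finset.mem_union_right _ hx⟩))
    rw [e1, e2]
    exact hsol'

end NormalForm

section NormalForm2

variable {L : FOLang}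

theorem eq_normal_form {E : FOForm L} (hE : IsEQ E) :
    (∀ (N : FOStruc L) (h : ℕ → N.carrier), ¬ ESat N h E) ∨
    ∃ V eqs, CharOf E V eqs := by
  induction hE with
  | tru =>
    refine Or.inr ⟨∅, [], by simp, by simp [pvars], fun N h => ?_⟩
    constructor
    · intro _
      exact ⟨h, fun x _ => rfl, fun p hp => by cases hp⟩
    · intro _
      exact trivial
  | fal =>
    exact Or.inl fun N h hf => hf
  | eq s t =>
    refine Or.inr ⟨∅, [(s, t)], by simp, ?_, fun N h => ?_⟩
    · intro a ha
      simp only [pvars, Finset.union_empty] at ha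
      simp only [FOForm.fv, Finset.empty_union]
      exact ha
    · constructor
      · intro hsat
        refine ⟨h, fun x _ => rfl, fun p hp => ?_⟩
        rcases List.mem_cons.1 hp with rfl | hp
        · exact hsat
        · cases hp
      · rintro ⟨g, hgh, hsol⟩
        have := hsol (s, t) (List.mem_cons_self)
        have hg : ∀ x, g x = h x := fun x => hgh x (Finset.notMem_empty x)
        show s.eval N.toInterp.toFOStruc h = t.eval N.toInterp.toFOStruc h
        calc s.eval _ h = s.eval _ g := FOTerm.eval_congr fun x _ => (hg x).symm
          _ = t.eval _ g := this
          _ = t.eval _ h := FOTerm.eval_congr fun x _ => hg x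
  | and hF hG ihF ihG =>
    rename_i F G
    rcases ihF with hL | ⟨V1', e1', c1'⟩
    · exact Or.inl fun N h hf => hL N h hf.1
    rcases ihG with hL | ⟨V2', e2', c2'⟩
    · exact Or.inl fun N h hf => hL N h hf.2
    obtain ⟨V1, e1, c1, hV1G⟩ := renameChar c1' G.fv
    obtain ⟨V2, e2, c2, hV2B⟩ := renameChar c2' (F.fv ∪ V1)
    obtain ⟨hV1F, hpv1, hchar1⟩ := c1
    obtain ⟨hV2G, hpv2, hchar2⟩ := c2
    have hV2F : ∀ x ∈ V2, x ∉ F.fv := by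
      intro x hx hxf
      exact Finset.eq_empty_iff_forall_notMem.1 hV2B x
        (Finset.mem_inter.2 ⟨hx, Finset.mem_union_left _ hxf⟩)
    have hV2V1 : ∀ x ∈ V2, x ∉ V1 := by
      intro x hx hxv
      exact Finset.eq_empty_iff_forall_notMem.1 hV2B x
        (Finset.mem_inter.2 ⟨hx, Finset.mem_union_right _ hxv⟩)
    have hV1G' : ∀ x ∈ V1, x ∉ G.fv := by
      intro x hx hxg
      exact Finset.eq_empty_iff_forall_notMem.1 hV1G x (Finset.mem_inter.2 ⟨hx, hxg⟩)
    have hV1F' : ∀ x ∈ V1, x ∉ F.fv := by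
      intro x hx hxf
      exact Finset.eq_empty_iff_forall_notMem.1 hV1F x (Finset.mem_inter.2 ⟨hx, hxf⟩)
    have hV2G' : ∀ x ∈ V2, x ∉ G.fv := by
      intro x hx hxg
      exact Finset.eq_empty_iff_forall_notMem.1 hV2G x (Finset.mem_inter.2 ⟨hx, hxg⟩)
    refine Or.inr ⟨V1 ∪ V2, e1 ++ e2, ⟨?_, ?_, ?_⟩⟩
    · apply Finset.eq_empty_of_forall_notMem
      intro a ha
      rcases Finset.mem_inter.1 ha with ⟨h1, h2⟩
      simp only [FOForm.fv, Finset.mem_union] at h2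
      rcases Finset.mem_union.1 h1 with h1 | h1 <;> rcases h2 with h2 | h2
      · exact hV1F' a h1 h2
      · exact hV1G' a h1 h2
      · exact hV2F a h1 h2
      · exact hV2G' a h1 h2
    · apply pvars_append_subset
      · intro a ha
        rcases Finset.mem_union.1 (hpv1 ha) with h | h
        · exact Finset.mem_union_left _ (Finset.mem_union_left _ h)
        · exact Finset.mem_union_right _ (by simp [FOForm.fv, h])
      · intro a ha
        rcases Finset.mem_union.1 (hpv2 ha) with h | h
        · exact Finset.mem_union_left _ (Finset.mem_union_right _ h)
        · exact Finset.mem_union_right _ (by simp [FOForm.fv, h])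
    · intro N h
      have hand : ESat N h (FOForm.and F G) ↔ ESat N h F ∧ ESat N h G := Iff.rfl
      rw [hand, hchar1 N h, hchar2 N h]
      constructor
      · rintro ⟨⟨g1, hg1, hs1⟩, ⟨g2, hg2, hs2⟩⟩
        classical
        refine ⟨fun x => if x ∈ V1 then g1 x else if x ∈ V2 then g2 x else h x,
          fun x hx => ?_, ?_⟩
        · simp only [Finset.mem_union, not_or] at hx
          simp only [if_neg hx.1, if_neg hx.2]
        · rw [solvesP_append]
          constructor
          · intro p hp
            have hagree : ∀ x ∈ p.1.vars ∪ p.2.vars,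
                (if x ∈ V1 then g1 x else if x ∈ V2 then g2 x else h x) = g1 x := by
              intro x hx
              have hx' : x ∈ V1 ∪ F.fv := hpv1 (mem_pvars.2 ⟨p, hp, hx⟩)
              rcases Finset.mem_union.1 hx' with h1 | h1
              · rw [if_pos h1]
              · have hxV1 : x ∉ V1 := fun hh => hV1F' x hh h1
                have hxV2 : x ∉ V2 := fun hh => hV2F x hh h1
                rw [if_neg hxV1, if_neg hxV2]
                exact (hg1 x hxV1).symm
            have e1' := FOTerm.eval_congr (M := N)
              (fun x hx => hagree x (Finset.mem_union_left _ hx)) (t := p.1)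
            have e2' := FOTerm.eval_congr (M := N)
              (fun x hx => hagree x (Finset.mem_union_right _ hx)) (t := p.2)
            rw [e1', e2']
            exact hs1 p hp
          · intro p hp
            have hagree : ∀ x ∈ p.1.vars ∪ p.2.vars,
                (if x ∈ V1 then g1 x else if x ∈ V2 then g2 x else h x) = g2 x := by
              intro x hx
              have hx' : x ∈ V2 ∪ G.fv := hpv2 (mem_pvars.2 ⟨p, hp, hx⟩)
              rcases Finset.mem_union.1 hx' with h1 | h1
              · rw [if_neg (fun hh => hV2V1 x h1 hh), if_pos h1]
              · have hxV1 : x ∉ V1 := fun hh => hV1G' x hh h1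
                have hxV2 : x ∉ V2 := fun hh => hV2G' x hh h1
                rw [if_neg hxV1, if_neg hxV2]
                exact (hg2 x hxV2).symm
            have e1' := FOTerm.eval_congr (M := N)
              (fun x hx => hagree x (Finset.mem_union_left _ hx)) (t := p.1)
            have e2' := FOTerm.eval_congr (M := N)
              (fun x hx => hagree x (Finset.mem_union_right _ hx)) (t := p.2)
            rw [e1', e2']
            exact hs2 p hp
      · rintro ⟨g, hgh, hsol⟩
        rw [solvesP_append] at hsol
        classical
        constructor
        · refine ⟨fun x => if x ∈ V1 then g x else h x, fun x hx => if_neg hx, ?_⟩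
          intro p hp
          have hagree : ∀ x ∈ p.1.vars ∪ p.2.vars,
              g x = (if x ∈ V1 then g x else h x) := by
            intro x hx
            have hx' : x ∈ V1 ∪ F.fv := hpv1 (mem_pvars.2 ⟨p, hp, hx⟩)
            rcases Finset.mem_union.1 hx' with h1 | h1
            · rw [if_pos h1]
            · have hxV1 : x ∉ V1 := fun hh => hV1F' x hh h1
              have hxV2 : x ∉ V2 := fun hh => hV2F x hh h1
              rw [if_neg hxV1]
              exact hgh x (by simp [hxV1, hxV2])
          have e1' := FOTerm.eval_congr (M := N)
            (fun x hx => hagree x (Finset.mem_union_left _ hx)) (t := p.1)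
          have e2' := FOTerm.eval_congr (M := N)
            (fun x hx => hagree x (Finset.mem_union_right _ hx)) (t := p.2)
          rw [← e1', ← e2']
          exact hsol.1 p hp
        · refine ⟨fun x => if x ∈ V2 then g x else h x, fun x hx => if_neg hx, ?_⟩
          intro p hp
          have hagree : ∀ x ∈ p.1.vars ∪ p.2.vars,
              g x = (if x ∈ V2 then g x else h x) := by
            intro x hx
            have hx' : x ∈ V2 ∪ G.fv := hpv2 (mem_pvars.2 ⟨p, hp, hx⟩)
            rcases Finset.mem_union.1 hx' with h1 | h1
            · rw [if_pos h1]
            · have hxV1 : x ∉ V1 := fun hh => hV1G' x hh h1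
              have hxV2 : x ∉ V2 := fun hh => hV2G' x hh h1
              rw [if_neg hxV2]
              exact hgh x (by simp [hxV1, hxV2])
          have e1' := FOTerm.eval_congr (M := N)
            (fun x hx => hagree x (Finset.mem_union_left _ hx)) (t := p.1)
          have e2' := FOTerm.eval_congr (M := N)
            (fun x hx => hagree x (Finset.mem_union_right _ hx)) (t := p.2)
          rw [← e1', ← e2']
          exact hsol.2 p hp
  | ex x hF ihF =>
    rename_i F
    rcases ihF with hL | ⟨V1', e1', c1'⟩
    · refine Or.inl fun N h hf => ?_
      obtain ⟨d, hd⟩ := hf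
      exact hL N (Function.update h x d) hd
    obtain ⟨V1, e1, c1, hV1x⟩ := renameChar c1' {x}
    obtain ⟨hV1F, hpv1, hchar1⟩ := c1
    have hxV1 : x ∉ V1 := by
      intro hx
      exact Finset.eq_empty_iff_forall_notMem.1 hV1x x
        (Finset.mem_inter.2 ⟨hx, Finset.mem_singleton_self x⟩)
    refine Or.inr ⟨insert x V1, e1, ⟨?_, ?_, ?_⟩⟩
    · apply Finset.eq_empty_of_forall_notMem
      intro a ha
      rcases Finset.mem_inter.1 ha with ⟨h1, h2⟩
      simp only [FOForm.fv, Finset.mem_erase] at h2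
      rcases Finset.mem_insert.1 h1 with rfl | h1
      · exact h2.1 rfl
      · exact Finset.eq_empty_iff_forall_notMem.1 hV1F a
          (Finset.mem_inter.2 ⟨h1, h2.2⟩)
    · intro a ha
      rcases Finset.mem_union.1 (hpv1 ha) with h | h
      · exact Finset.mem_union_left _ (Finset.mem_insert_of_mem h)
      · by_cases hax : a = x
        · exact Finset.mem_union_left _ (hax ▸ Finset.mem_insert_self _ _)
        · exact Finset.mem_union_right _ (by
            simp only [FOForm.fv, Finset.mem_erase]
            exact ⟨hax, h⟩)
    · intro N h
      have hex : ESat N h (FOForm.ex x F) ↔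
          ∃ d, ESat N (Function.update h x d) F := Iff.rfl
      rw [hex]
      constructor
      · rintro ⟨d, hd⟩
        obtain ⟨g, hgh, hsol⟩ := (hchar1 N _).1 hd
        refine ⟨g, fun y hy => ?_, hsol⟩
        simp only [Finset.mem_insert, not_or] at hy
        rw [hgh y hy.2, Function.update_of_ne hy.1]
      · rintro ⟨g, hgh, hsol⟩
        refine ⟨g x, (hchar1 N _).2 ⟨g, fun y hy => ?_, hsol⟩⟩
        by_cases hyx : y = x
        · subst hyx
          rw [Function.update_self]
        · rw [Function.update_of_ne hyx]
          exact hgh y (by simp [hyx, hy])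

end NormalForm2

section SolvedChar

variable {L : FOLang}

theorem eq_solved_char {E : FOForm L} (hE : IsEQ E) (B : Finset ℕ) :
    (∀ N : FOStruc L, IsFEA N → ∀ h : ℕ → N.carrier, ¬ ESat N h E) ∨
    ∃ (V : Finset ℕ) (σ : List (ℕ × FOTerm L)),
      V ∩ (E.fv ∪ B) = ∅ ∧ SolvedL σ ∧ svars σ ⊆ V ∪ E.fv ∧
      ∀ N : FOStruc L, IsFEA N → ∀ h : ℕ → N.carrier,
        (ESat N h E ↔ ∃ g, (∀ x ∉ V, g x = h x) ∧ SolvesS N g σ) := by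
  rcases eq_normal_form hE with hL | ⟨V0, eqs0, c0⟩
  · exact Or.inl fun N _ h hs => hL N h hs
  obtain ⟨V, eqs, ⟨hVfv, hpv, hchar⟩, hVB⟩ := renameChar c0 B
  rcases hu : unify eqs with _ | σ
  · refine Or.inl fun N hN h hs => ?_
    obtain ⟨g, _, hsol⟩ := (hchar N h).1 hs
    exact (unify_correct eqs).1 hu N hN g hsol
  · obtain ⟨hS, hv, hiff⟩ := (unify_correct eqs).2 σ hu
    refine Or.inr ⟨V, σ, ?_, hS, fun a ha => hpv (hv ha), fun N hN h => ?_⟩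
    · rw [Finset.inter_union_distrib_left, hVfv, hVB, Finset.union_empty]
    · rw [hchar N h]
      constructor
      · rintro ⟨g, hg, hsol⟩
        exact ⟨g, hg, (hiff N hN g).1 hsol⟩
      · rintro ⟨g, hg, hsol⟩
        exact ⟨g, hg, (hiff N hN g).2 hsol⟩

lemma nonkey_of_mem_rhs {σ : List (ℕ × FOTerm L)} (hS : SolvedL σ)
    {w : ℕ} {s : FOTerm L} (hws : (w, s) ∈ σ) {y : ℕ} (hy : y ∈ s.vars) :
    y ∉ σ.map Prod.fst := by
  intro hk
  rcases List.mem_map.1 hk with ⟨p, hp, rfl⟩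
  exact hS.2 p hp (w, s) hws hy

lemma solvesS_param {N : FOStruc L} {σ : List (ℕ × FOTerm L)} (hS : SolvedL σ)
    (V : Finset ℕ) (h : ℕ → N.carrier) :
    (∃ g, (∀ x ∉ V, g x = h x) ∧ SolvesS N g σ) ↔
    ∃ m : ℕ → N.carrier, ∀ x ∉ V, h x = (subL σ x).eval N m := by
  constructor
  · rintro ⟨g, hg, hs⟩
    exact ⟨g, fun x hx => by rw [← hg x hx, eval_subL_of_solves hS.1 hs x]⟩
  · rintro ⟨m, hm⟩
    refine ⟨fun x => (subL σ x).eval N m, fun x hx => (hm x hx).symm, ?_⟩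
    intro p hp
    have h1 : subL σ p.1 = p.2 := subL_of_mem hS.1 (by exact hp)
    have h2 : p.2.eval N (fun x => (subL σ x).eval N m) = p.2.eval N m := by
      apply FOTerm.eval_congr
      intro y hy
      rw [subL_of_not_mem (nonkey_of_mem_rhs hS hp hy)]
      rfl
    show (subL σ p.1).eval N m = _
    rw [h1, h2]

lemma solved_satisfiable (N : FOStruc L) (σ : List (ℕ × FOTerm L)) (V : Finset ℕ) :
    ∃ h : ℕ → N.carrier, ∃ m : ℕ → N.carrier, ∀ x ∉ V, h x = (subL σ x).eval N m := by
  obtain ⟨a⟩ := N.inhab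
  exact ⟨fun x => (subL σ x).eval N (fun _ => a), fun _ => a, fun x _ => rfl⟩

end SolvedChar

section CoreTransfer

variable {L : FOLang}

/-- the value of the constant in a structure -/
noncomputable def cval (c : L.Func) (hc0 : L.farity c = 0) (N : FOStruc L) : N.carrier :=
  N.funcs c (fun i => (Fin.cast hc0 i).elim0)

theorem core_transfer {c : L.Func} (hc0 : L.farity c = 0) (M : FOStruc L)
    (hM : IsFEA M) (hnt : M.Nontriv) (sys : List (FOTerm L × FOTerm L)) (X : Finset ℕ)
    (H : ∀ m : ℕ → M.carrier, ∃ γ, (∀ x ∉ X, γ x = m x) ∧ SolvesP M γ sys) :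
    ∀ N : FOStruc L, IsFEA N → ∀ m : ℕ → N.carrier,
      ∃ γ, (∀ x ∉ X, γ x = m x) ∧ SolvesP N γ sys := by
  classical
  obtain ⟨a, b, hab⟩ := hnt
  rcases hu : unify sys with _ | μ
  · exfalso
    obtain ⟨γ, _, hγ⟩ := H (fun _ => cval c hc0 M)
    exact (unify_correct sys).1 hu M hM γ hγ
  obtain ⟨hS, hv, hiff⟩ := (unify_correct sys).2 μ hu
  have H' : ∀ m : ℕ → M.carrier, ∃ γ, (∀ x ∉ X, γ x = m x) ∧ SolvesS M γ μ := by
    intro m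
    obtain ⟨γ, h1, h2⟩ := H m
    exact ⟨γ, h1, (hiff M hM γ).1 h2⟩
  -- Step S : syntactic shape of equations whose key is not in X
  have stepS : ∀ p ∈ μ, (p.1 : ℕ) ∉ X → ∃ z : ℕ, (p.2 : FOTerm L) = FOTerm.var z ∧
      z ∈ X ∧ z ∉ μ.map Prod.fst ∧
      ∀ q ∈ μ, (q.1 : ℕ) ∉ X → (q.2 : FOTerm L) = FOTerm.var z → q.1 = p.1 := by
    intro p hp hpX
    rcases hp2 : (p.2 : FOTerm L) with z | ⟨f, ts⟩
    · -- rhs is a variable z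
      have hznk : z ∉ μ.map Prod.fst := by
        have := nonkey_of_mem_rhs hS hp (y := z) (by
          rw [hp2]; simp [FOTerm.vars])
        rcases p with ⟨w, s⟩
        simp only at hp2
        subst hp2
        exact this
      by_cases hzX : z ∈ X
      · refine ⟨z, rfl, hzX, hznk, ?_⟩
        intro q hq hqX hq2
        by_contra hne
        obtain ⟨γ, hγX, hγS⟩ := H' (fun y => if y = p.1 then a else b)
        have e1 : γ p.1 = a := by rw [hγX p.1 hpX]; simp
        have e2 : γ q.1 = b := by rw [hγX q.1 hqX]; simp [hne]
        have e3 : γ p.1 = γ z := by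
          have := hγS p hp
          rw [hp2] at this
          exact this
        have e4 : γ q.1 = γ z := by
          have := hγS q hq
          rw [hq2] at this
          exact this
        have : a = b := by rw [← e1, e3, ← e4, e2]
        exact hab this
      · -- z not in X : contradiction
        exfalso
        have hzp : z ≠ p.1 := by
          intro he
          apply hznk
          rw [he]
          exact List.mem_map.2 ⟨p, hp, rfl⟩
        obtain ⟨γ, hγX, hγS⟩ := H' (fun y => if y = p.1 then a else b)
        have e1 : γ p.1 = a := by rw [hγX p.1 hpX]; simp
        have e2 : γ z = b := by rw [hγX z hzX]; simp [hzp]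
        have e3 : γ p.1 = γ z := by
          have := hγS p hp
          rw [hp2] at this
          exact this
        rw [e1, e2] at e3
        exact hab e3
    · -- rhs is a function application : contradiction
      exfalso
      by_cases hfc : f = c
      · -- nullary: value is independent of valuation
        subst hfc
        haveI hie : IsEmpty (Fin (L.farity f)) := by
          rw [hc0]
          exact Fin.isEmpty'
        set w : M.carrier := M.funcs f (fun i => isEmptyElim i) with hw
        have hval : ∀ γ : ℕ → M.carrier, (p.2 : FOTerm L).eval M γ = w := by
          intro γ
          rw [hp2]
          show M.funcs f _ = _
          congr 1
          funext i
          exact isEmptyElim i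
        set v : M.carrier := if a = w then b else a with hv'
        have hvw : v ≠ w := by
          rw [hv']
          split_ifs with h
          · rw [← h]
            exact fun hh => hab hh.symm
          · exact h
        obtain ⟨γ, hγX, hγS⟩ := H' (fun y => if y = p.1 then v else v)
        have e1 : γ p.1 = v := by rw [hγX p.1 hpX]; simp
        have e2 : γ p.1 = w := by rw [hγS p hp, hval]
        rw [e1] at e2
        exact hvw e2
      · -- clash with the constant
        obtain ⟨γ, hγX, hγS⟩ := H' (fun _ => cval c hc0 M)
        have e1 : γ p.1 = cval c hc0 M := hγX p.1 hpX
        have e2 := hγS p hp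
        rw [hp2] at e2
        rw [e1] at e2
        exact hM.disj c f (fun h => hfc h.symm) _ _ e2
  -- construct a solution in N
  intro N hN m
  set e : ℕ → N.carrier := fun z =>
    if hz : ∃ p, p ∈ μ ∧ (p.1 : ℕ) ∉ X ∧ (p.2 : FOTerm L) = FOTerm.var z
    then m (Classical.choose hz).1 else m z with he
  set γ₀ : ℕ → N.carrier := fun y => if y ∈ X then e y else m y with hγ₀
  set γ : ℕ → N.carrier := fun y => (subL μ y).eval N γ₀ with hγ
  have hnonkey : ∀ y ∉ μ.map Prod.fst, γ y = γ₀ y := by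
    intro y hy
    rw [hγ]
    simp only
    rw [subL_of_not_mem hy]
    rfl
  have hkey : ∀ p ∈ μ, γ p.1 = (p.2 : FOTerm L).eval N γ₀ := by
    intro p hp
    rw [hγ]
    simp only
    rw [subL_of_mem hS.1 (by exact hp)]
  have hsolv : SolvesS N γ μ := by
    intro p hp
    rw [hkey p hp]
    apply (FOTerm.eval_congr _).symm
    intro y hy
    exact hnonkey y (nonkey_of_mem_rhs hS hp hy)
  refine ⟨γ, ?_, (hiff N hN γ).2 hsolv⟩
  intro y hy
  by_cases hyk : y ∈ μ.map Prod.fst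
  · rcases List.mem_map.1 hyk with ⟨p, hp, rfl⟩
    obtain ⟨z, hz1, hz2, hz3, hz4⟩ := stepS p hp hy
    rw [hkey p hp, hz1]
    show γ₀ z = m p.1
    rw [hγ₀]
    simp only [if_pos hz2, he]
    have hex : ∃ q, q ∈ μ ∧ (q.1 : ℕ) ∉ X ∧ (q.2 : FOTerm L) = FOTerm.var z :=
      ⟨p, hp, hy, hz1⟩
    rw [dif_pos hex]
    obtain ⟨hq1, hq2, hq3⟩ := Classical.choose_spec hex
    rw [hz4 _ hq1 hq2 hq3]
  · rw [hnonkey y hyk, hγ₀]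
    simp [hy]

end CoreTransfer

section MainAssembly

variable {L : FOLang}

lemma key_mem_svars {σ : List (ℕ × FOTerm L)} {y : ℕ}
    (hy : y ∈ σ.map Prod.fst) : y ∈ svars σ := by
  rcases List.mem_map.1 hy with ⟨p, hp, rfl⟩
  exact mem_svars.2 ⟨p, hp, Or.inl rfl⟩

theorem eq_implication_transfer (hc : L.HasConst) (M : FOStruc L) (hM : IsFEA M)
    (hnt : M.Nontriv) {E E' : FOForm L} (hE : IsEQ E) (hE' : IsEQ E')
    (hIncl : SolE M E ⊆ SolE M E') :
    ∀ N : FOStruc L, IsFEA N → ∀ h : ℕ → N.carrier, ESat N h E → ESat N h E' := by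
  classical
  obtain ⟨c, hc0⟩ := hc
  rcases eq_solved_char hE E'.fv with hunsat | ⟨V, σ, hVd, hS, hsv, hchar⟩
  · exact fun N hN h hs => absurd hs (hunsat N hN h)
  have hVnot : ∀ x ∈ V, x ∉ E.fv ∪ E'.fv := by
    intro x hx hx2
    exact Finset.eq_empty_iff_forall_notMem.1 hVd x (Finset.mem_inter.2 ⟨hx, hx2⟩)
  rcases eq_solved_char hE' (V ∪ E.fv) with hunsat' | ⟨V', σ', hVd', hS', hsv', hchar'⟩
  · exfalso
    obtain ⟨h₀, m₀, hm₀⟩ := solved_satisfiable M σ V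
    have hsat : ESat M h₀ E := (hchar M hM h₀).2 ((solvesS_param hS V h₀).2 ⟨m₀, hm₀⟩)
    exact hunsat' M hM h₀ (hIncl hsat)
  have hV'not : ∀ x ∈ V', x ∉ E'.fv ∪ (V ∪ E.fv) := by
    intro x hx hx2
    exact Finset.eq_empty_iff_forall_notMem.1 hVd' x (Finset.mem_inter.2 ⟨hx, hx2⟩)
  -- variables of subL σ terms avoid V'
  have hsubσ_vars : ∀ y ∉ V', ∀ x ∈ (subL σ y).vars, x ∉ V' := by
    intro y hy x hx hxV'
    rcases Finset.mem_insert.1 (vars_subL_subset y hx) with rfl | hxs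
    · exact hy hxV'
    · exact hV'not x hxV' (Finset.mem_union_right _ (hsv hxs))
  have hkeysσ_notV' : ∀ y ∈ V', y ∉ σ.map Prod.fst := by
    intro y hy hk
    exact hV'not y hy (Finset.mem_union_right _ (hsv (key_mem_svars hk)))
  -- the combined system
  set sys : List (FOTerm L × FOTerm L) := σ'.filterMap
    (fun p => if p.1 ∈ V' then none
      else some (subL σ p.1, p.2.applyT (subL σ))) with hsys
  have mem_sys : ∀ q, q ∈ sys ↔ ∃ p ∈ σ', (p.1 : ℕ) ∉ V' ∧
      q = (subL σ p.1, p.2.applyT (subL σ)) := by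
    intro q
    rw [hsys, List.mem_filterMap]
    constructor
    · rintro ⟨p, hp, hq⟩
      by_cases hpV : p.1 ∈ V'
      · rw [if_pos hpV] at hq; cases hq
      · rw [if_neg hpV] at hq
        exact ⟨p, hp, hpV, (Option.some.injEq _ _ ▸ hq).symm⟩
    · rintro ⟨p, hp, hpV, rfl⟩
      exact ⟨p, hp, by rw [if_neg hpV]⟩
  -- hypothesis of core transfer, in M
  have Hcore : ∀ m : ℕ → M.carrier,
      ∃ γ, (∀ x ∉ V', γ x = m x) ∧ SolvesP M γ sys := by
    intro m
    set hm : ℕ → M.carrier := fun x => (subL σ x).eval M m with hhm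
    have hsatE : ESat M hm E :=
      (hchar M hM hm).2 ((solvesS_param hS V hm).2 ⟨m, fun x _ => rfl⟩)
    have hsatE' : ESat M hm E' := hIncl hsatE
    obtain ⟨g', hg', hs'⟩ := (hchar' M hM hm).1 hsatE'
    refine ⟨fun x => if x ∈ V' then g' x else m x, fun x hx => if_neg hx, ?_⟩
    intro q hq
    obtain ⟨p, hp, hpV, rfl⟩ := (mem_sys q).1 hq
    have hLHS : (subL σ p.1).eval M (fun x => if x ∈ V' then g' x else m x) =
        (subL σ p.1).eval M m := by
      apply FOTerm.eval_congr
      intro x hx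
      rw [if_neg (fun hxV' => hsubσ_vars p.1 hpV x hx hxV')]
    have hp2vars : ∀ y ∈ (p.2 : FOTerm L).vars, y ∈ V' ∪ E'.fv := by
      intro y hy
      exact hsv' (mem_svars.2 ⟨p, hp, Or.inr hy⟩)
    have hRHS : ((p.2 : FOTerm L).applyT (subL σ)).eval M
        (fun x => if x ∈ V' then g' x else m x) = (p.2 : FOTerm L).eval M g' := by
      rw [FOTerm.eval_applyT]
      apply FOTerm.eval_congr
      intro y hy
      rcases Finset.mem_union.1 (hp2vars y hy) with hyV' | hyfv
      · rw [subL_of_not_mem (hkeysσ_notV' y hyV')]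
        show (if y ∈ V' then g' y else m y) = g' y
        rw [if_pos hyV']
      · have hynV' : y ∉ V' := fun hh => hV'not y hh (Finset.mem_union_left _ hyfv)
        have : (subL σ y).eval M (fun x => if x ∈ V' then g' x else m x) =
            (subL σ y).eval M m := by
          apply FOTerm.eval_congr
          intro x hx
          rw [if_neg (fun hxV' => hsubσ_vars y hynV' x hx hxV')]
        rw [this]
        exact (hg' y hynV').symm
    show (subL σ p.1).eval M _ = _
    rw [hLHS, hRHS]
    have : (subL σ p.1).eval M m = hm p.1 := rfl
    rw [this, ← hg' p.1 hpV]
    exact hs' p hp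
  -- transfer to arbitrary FEA models
  have Hall := core_transfer hc0 M hM hnt sys V' Hcore
  intro N hN h hsE
  obtain ⟨m, hm⟩ := (solvesS_param hS V h).1 ((hchar N hN h).1 hsE)
  obtain ⟨γ, hγV', hγsys⟩ := Hall N hN m
  set γ₀ : ℕ → N.carrier := fun x => if x ∈ V' then γ x else h x with hγ₀
  set g' : ℕ → N.carrier :=
    fun x => if x ∈ V' then (subL σ' x).eval N γ₀ else h x with hg'
  apply (hchar' N hN h).2
  refine ⟨g', fun x hx => if_neg hx, ?_⟩
  intro p hp
  have hp2vars : ∀ y ∈ (p.2 : FOTerm L).vars, y ∈ V' ∪ E'.fv := by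
    intro y hy
    exact hsv' (mem_svars.2 ⟨p, hp, Or.inr hy⟩)
  have heval_g'_γ₀ : (p.2 : FOTerm L).eval N g' = (p.2 : FOTerm L).eval N γ₀ := by
    apply FOTerm.eval_congr
    intro y hy
    have hynk : y ∉ σ'.map Prod.fst := nonkey_of_mem_rhs hS' hp hy
    by_cases hyV' : y ∈ V'
    · show (if y ∈ V' then (subL σ' y).eval N γ₀ else h y) = γ₀ y
      rw [if_pos hyV', subL_of_not_mem hynk]
      show γ₀ y = γ₀ y
      rfl
    · show (if y ∈ V' then (subL σ' y).eval N γ₀ else h y) = γ₀ y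
      rw [if_neg hyV', hγ₀]
      simp only [if_neg hyV']
  by_cases hpV : (p.1 : ℕ) ∈ V'
  · show (if p.1 ∈ V' then (subL σ' p.1).eval N γ₀ else h p.1) = _
    rw [if_pos hpV, subL_of_mem hS'.1 (by exact hp), heval_g'_γ₀]
  · -- use the combined system
    have hq : (subL σ p.1, (p.2 : FOTerm L).applyT (subL σ)) ∈ sys :=
      (mem_sys _).2 ⟨p, hp, hpV, rfl⟩
    have hsysp := hγsys _ hq
    have hp1fv : (p.1 : ℕ) ∈ E'.fv := by
      have : (p.1 : ℕ) ∈ V' ∪ E'.fv :=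
        hsv' (key_mem_svars (List.mem_map.2 ⟨p, hp, rfl⟩))
      rcases Finset.mem_union.1 this with h1 | h1
      · exact absurd h1 hpV
      · exact h1
    have hp1V : (p.1 : ℕ) ∉ V := fun hh =>
      hVnot p.1 hh (Finset.mem_union_right _ hp1fv)
    have hLHS : (subL σ p.1).eval N γ = (subL σ p.1).eval N m := by
      apply FOTerm.eval_congr
      intro x hx
      exact hγV' x (fun hxV' => hsubσ_vars p.1 hpV x hx hxV')
    have hLHS2 : h p.1 = (subL σ p.1).eval N γ := by
      rw [hLHS]
      exact hm p.1 hp1V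
    have hRHS : ((p.2 : FOTerm L).applyT (subL σ)).eval N γ =
        (p.2 : FOTerm L).eval N γ₀ := by
      rw [FOTerm.eval_applyT]
      apply FOTerm.eval_congr
      intro y hy
      rcases Finset.mem_union.1 (hp2vars y hy) with hyV' | hyfv
      · rw [subL_of_not_mem (hkeysσ_notV' y hyV')]
        show γ y = γ₀ y
        rw [hγ₀]
        simp only [if_pos hyV']
      · have hynV' : y ∉ V' := fun hh => hV'not y hh (Finset.mem_union_left _ hyfv)
        have e1 : (subL σ y).eval N γ = (subL σ y).eval N m := by
          apply FOTerm.eval_congr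
          intro x hx
          exact hγV' x (fun hxV' => hsubσ_vars y hynV' x hx hxV')
        have hyV : y ∉ V := fun hh => hVnot y hh (Finset.mem_union_right _ hyfv)
        rw [e1]
        rw [hγ₀]
        simp only [if_neg hynV']
        exact (hm y hyV).symm
    show (if p.1 ∈ V' then (subL σ' p.1).eval N γ₀ else h p.1) = _
    rw [if_neg hpV, heval_g'_γ₀, hLHS2, hsysp, hRHS]

end MainAssembly

/-- For a non-trivial model `M` of `FEA(L)` and
EQ-formulas `E`, `E'`: solution sets in `M` coincide (are included) iff the
equivalence (implication) holds in every model of `FEA(L)`. -/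
theorem solutions_eq_iff_equiv {L : FOLang} (hc : L.HasConst)
    (M : FOStruc L) (hM : IsFEA M) (hnt : M.Nontriv)
    (E E' : FOForm L) (hE : IsEQ E) (hE' : IsEQ E') :
    (SolE M E = SolE M E' ↔
      ∀ N : FOStruc L, IsFEA N → ∀ h : ℕ → N.carrier, ESat N h E ↔ ESat N h E') ∧
    (SolE M E ⊆ SolE M E' ↔
      ∀ N : FOStruc L, IsFEA N → ∀ h : ℕ → N.carrier, ESat N h E → ESat N h E') := by
  have himp : ∀ (F F' : FOForm L), IsEQ F → IsEQ F' →
      (SolE M F ⊆ SolE M F' ↔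
        ∀ N : FOStruc L, IsFEA N → ∀ h : ℕ → N.carrier, ESat N h F → ESat N h F') := by
    intro F F' hF hF'
    constructor
    · exact fun hIncl => eq_implication_transfer hc M hM hnt hF hF' hIncl
    · intro hAll h hh
      exact hAll M hM h hh
  constructor
  · constructor
    · intro hEq N hN h
      exact ⟨(himp E E' hE hE').1 (le_of_eq hEq) N hN h,
        (himp E' E hE' hE).1 (le_of_eq hEq.symm) N hN h⟩
    · intro hAll
      apply Set.Subset.antisymm
      · exact (himp E E' hE hE').2 (fun N hN h hs => (hAll N hN h).1 hs)
      · exact (himp E' E hE' hE).2 (fun N hN h hs => (hAll N hN h).2 hs)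
  · exact himp E E' hE hE'
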